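/- arXiv:0808.4135 — 10 statements merged into one kernel-verified Lean document; each statement's English description precedes it below -/
import Mathlib

section
/- Let p be a probability distribution over a finite alphabet X (with |X| ≥ 1) and let p_u be the uniform distribution over X. Then the Shannon entropy satisfies H(p) ≥ log|X| · (1 − |X| · ‖p − p_u‖_∞), where ‖·‖_∞ is the maximum absolute difference of coordinates and log is base 2. -/
/-!
Pointwise, `negMulLog t = -t log t` dominates on `[0, 1]` the tent `log N · (1/N - |t - 1/N|)`,
which vanishes at `0` and meets `negMulLog` at its peak `1/N`. On `[0, 1/N]` this is `log t ≤ -log N`;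
on `[1/N, 1]` the concave `negMulLog` lies above its chord, which for `N ≥ 2` lies above the falling
side of the tent, the gap being proportional to `(N - 2)(N t - 1)`. Summing over the `N` letters
with `|p x - 1/N| ≤ ‖p - p_u‖_∞` gives the bound.
-/

open Real Finset

lemma mul_log_le_negMulLog_of_le_inv {N t : ℝ} (ht₀ : 0 ≤ t) (ht : t ≤ N⁻¹) :
    t * log N ≤ negMulLog t := by
  rcases ht₀.eq_or_lt with rfl | ht₀
  · simp
  have hlog : log t ≤ -log N := by
    rw [← log_inv]
    exact log_le_log ht₀ ht
  rw [negMulLog]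
  nlinarith

lemma log_mul_div_le_negMulLog_of_inv_le {N t : ℝ} (hN : 1 < N) (ht : N⁻¹ ≤ t) (ht₁ : t ≤ 1) :
    log N * (1 - t) / (N - 1) ≤ negMulLog t := by
  have hN₀ : 0 < N := by linarith
  have hN₁ : 0 < N - 1 := by linarith
  set a := N * (1 - t) / (N - 1)
  set b := (N * t - 1) / (N - 1)
  have ha : 0 ≤ a := div_nonneg (by nlinarith) hN₁.le
  have hb : 0 ≤ b := by
    have : 1 ≤ N * t := by rwa [inv_le_iff_one_le_mul₀' hN₀] at ht
    exact div_nonneg (by linarith) hN₁.le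
  have hab : a + b = 1 := by
    simp only [a, b]
    field_simp
    ring
  have hchord : a • negMulLog N⁻¹ + b • negMulLog 1 ≤ negMulLog (a • N⁻¹ + b • (1 : ℝ)) :=
    concaveOn_negMulLog.2 (inv_nonneg.2 hN₀.le) (Set.mem_Ici.2 zero_le_one) ha hb hab
  have hpoint : a • N⁻¹ + b • (1 : ℝ) = t := by
    simp only [a, b, smul_eq_mul]
    field_simp
    ring
  have hpeak : negMulLog N⁻¹ = N⁻¹ * log N := by
    rw [negMulLog, log_inv]
    ring
  rw [hpoint, hpeak, negMulLog_one, smul_eq_mul, smul_zero, add_zero] at hchord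
  convert hchord using 1
  simp only [a]
  field_simp

lemma log_mul_sub_abs_sub_inv_le_negMulLog {N t : ℝ} (hN : 2 ≤ N) (ht₀ : 0 ≤ t) (ht₁ : t ≤ 1) :
    log N * (N⁻¹ - |t - N⁻¹|) ≤ negMulLog t := by
  have hN₀ : 0 < N := by linarith
  rcases le_total t N⁻¹ with ht | ht
  · rw [abs_of_nonpos (by linarith)]
    convert mul_log_le_negMulLog_of_le_inv ht₀ ht using 1
    ring
  · refine le_trans ?_ (log_mul_div_le_negMulLog_of_inv_le (by linarith) ht ht₁)
    rw [abs_of_nonneg (by linarith), le_div_iff₀ (by linarith)]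
    have hNt : 1 ≤ N * t := by
      rwa [inv_le_iff_one_le_mul₀' hN₀] at ht
    have hkey : (N⁻¹ - (t - N⁻¹)) * (N - 1) ≤ 1 - t := by
      have hfactor : 1 - t - (N⁻¹ - (t - N⁻¹)) * (N - 1) = (N - 2) * (N * t - 1) / N := by
        field_simp
        ring
      rw [← sub_nonneg, hfactor]
      exact div_nonneg (mul_nonneg (sub_nonneg.2 hN) (sub_nonneg.2 hNt)) hN₀.le
    rw [mul_assoc]
    exact mul_le_mul_of_nonneg_left hkey (log_nonneg (by linarith))

lemma logb_mul_sub_abs_sub_inv_le_neg_mul_logb (n : ℕ) {t : ℝ} (ht₀ : 0 ≤ t) (ht₁ : t ≤ 1) :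
    logb 2 n * ((n : ℝ)⁻¹ - |t - (n : ℝ)⁻¹|) ≤ -(t * logb 2 t) := by
  have hRHS : -(t * logb 2 t) = negMulLog t / log 2 := by
    rw [logb, negMulLog]
    ring
  rw [hRHS]
  rcases le_or_gt n 1 with hn | hn
  · have : logb 2 (n : ℝ) = 0 := by
      interval_cases n <;> simp
    rw [this, zero_mul]
    exact div_nonneg (negMulLog_nonneg ht₀ ht₁) (log_nonneg one_le_two)
  · rw [logb, div_mul_eq_mul_div]
    gcongr
    exact log_mul_sub_abs_sub_inv_le_negMulLog (by exact_mod_cast hn) ht₀ ht₁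

/-- **Entropy L∞ bound.** For a probability distribution `p` over a finite alphabet `X`,
`H(p) ≥ log₂|X| · (1 − |X| · ‖p − p_u‖_∞)` where `p_u` is uniform. -/
theorem entropy_Linf_bound {X : Type*} [Fintype X] [Nonempty X]
    (p : X → ℝ) (hp : ∀ x, 0 ≤ p x) (hsum : ∑ x, p x = 1) :
    (-∑ x, p x * Real.logb 2 (p x)) ≥
      Real.logb 2 (Fintype.card X) *
        (1 - (Fintype.card X : ℝ) *
          (Finset.univ.sup' Finset.univ_nonempty
            fun x => |p x - 1 / (Fintype.card X : ℝ)|)) := by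
  set n := Fintype.card X with hn_def
  set ε := univ.sup' univ_nonempty fun x => |p x - 1 / (n : ℝ)|
  have hn : (n : ℝ) ≠ 0 := Nat.cast_ne_zero.2 Fintype.card_ne_zero
  have hpoint (x : X) : logb 2 n * ((n : ℝ)⁻¹ - ε) ≤ -(p x * logb 2 (p x)) := by
    have hp₁ : p x ≤ 1 := hsum ▸ single_le_sum (fun y _ => hp y) (mem_univ x)
    have hε : |p x - 1 / (n : ℝ)| ≤ ε := le_sup' (fun y => |p y - 1 / (n : ℝ)|) (mem_univ x)
    rw [one_div] at hε
    refine le_trans ?_ (logb_mul_sub_abs_sub_inv_le_neg_mul_logb n (hp x) hp₁)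
    gcongr
    exact logb_nonneg one_lt_two (Nat.one_le_cast.2 Fintype.card_pos)
  calc logb 2 n * (1 - n * ε) = ∑ _x : X, logb 2 n * ((n : ℝ)⁻¹ - ε) := by
        rw [sum_const, card_univ, ← hn_def, nsmul_eq_mul]
        field_simp
    _ ≤ ∑ x, -(p x * logb 2 (p x)) := sum_le_sum fun x _ => hpoint x
    _ = -∑ x, p x * logb 2 (p x) := by rw [sum_neg_distrib]
end

section
/- For any individual sequence zomb ∈ X^n over a finite alphabet X, the Krichevsky–Trofimov sequential probability estimator satisfies −(1/n) log p̂^{KT}(z^n) ≤ H_emp(z^n) + ((|X|−1) log n + C)/(2n) for some constant C depending only on |X|, where H_emp(z^n) is the entropy of the empirical distribution of z^n. -/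
/-!
Counting, position by position, how often each symbol has occurred so far shows that the KT
probability is a ratio of rising factorials `(x)^(m) = x (x + 1) ⋯ (x + m - 1)`, namely
`∏ᵢ (1/2)^(cᵢ) / (|X|/2)^(n)`, where `cᵢ` is the number of occurrences of the symbol `i`
in `zⁿ`. Stirling's formula gives `log (1/2)^(N) = N log N - N + O(1)`, so the numerator
contributes `∑ᵢ cᵢ log cᵢ - n + O(1)`. Concavity of `log` gives
`log (k + a) ≤ log (k + 1/2) + (a - 1/2)/(k + 1/2)`, and summing this harmonic-type bound shows
`(a)^(n) ≤ (1/2)^(n) · O(n^(a - 1/2))`; for `a = |X|/2` the denominator contributes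
`n log n - n + ((|X| - 1)/2) log n + O(1)`. The difference is
`n H_emp(zⁿ) + ((|X| - 1)/2) log n + O(1)` in nats.
-/

open Finset

/-- The probability assigned by the Krichevsky–Trofimov sequential estimator to
an individual sequence `z ∈ Xⁿ`:
`p̂ᴷᵀ(zⁿ) = ∏ₖ (n_{z_k}(z^{k−1}) + 1/2)/(k − 1 + |X|/2)` (0-indexed positions). -/
noncomputable def ktProb {X : Type*} [Fintype X] [DecidableEq X] {n : ℕ}
    (z : Fin n → X) : ℝ :=
  ∏ k : Fin n,
    (((Finset.univ.filter (fun j : Fin n => j < k ∧ z j = z k)).card : ℝ) + 1/2) /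
      ((k : ℝ) + (Fintype.card X : ℝ) / 2)

open Real
open scoped Nat

theorem Finset.prod_card_filter_lt {α M : Type*} [LinearOrder α] [CommMonoid M]
    (s : Finset α) (f : ℕ → M) :
    ∏ k ∈ s, f #{j ∈ s | j < k} = ∏ t ∈ range #s, f t := by
  classical
  induction s using Finset.induction_on_max with
  | empty => simp
  | insert a s hlt ih =>
    have ha : a ∉ s := fun h => lt_irrefl a (hlt a h)
    have hfilter : ∀ k ∈ s, {j ∈ insert a s | j < k} = {j ∈ s | j < k} := fun k hk => by
      rw [filter_insert, if_neg (hlt k hk).not_gt]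
    have htop : {j ∈ insert a s | j < a} = s := by
      rw [filter_insert, if_neg (lt_irrefl a), filter_true_of_mem hlt]
    rw [prod_insert ha, card_insert_of_notMem ha, prod_range_succ, htop,
      prod_congr rfl fun k hk => congrArg f (congrArg card (hfilter k hk)), ih, mul_comm]

theorem ascPochhammer_eval_eq_prod_range {R : Type*} [CommSemiring R] (n : ℕ) (r : R) :
    (ascPochhammer R n).eval r = ∏ j ∈ range n, (r + j) := by
  induction n with
  | zero => simp
  | succ n ih => rw [ascPochhammer_succ_eval, ih, prod_range_succ]

theorem ktProb_eq_prod_ascPochhammer_div {X : Type*} [Fintype X] [DecidableEq X] {n : ℕ}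
    (z : Fin n → X) :
    ktProb z = (∏ i, (ascPochhammer ℝ #{j | z j = i}).eval (1 / 2)) /
      (ascPochhammer ℝ n).eval ((Fintype.card X : ℝ) / 2) := by
  rw [ktProb, prod_div_distrib, ascPochhammer_eval_eq_prod_range,
    ← Fin.prod_univ_eq_prod_range (fun k => (Fintype.card X : ℝ) / 2 + k)]
  congr 1
  · rw [← prod_fiberwise univ z]
    refine prod_congr rfl fun i _ => ?_
    rw [ascPochhammer_eval_eq_prod_range, ← prod_card_filter_lt]
    refine prod_congr rfl fun k hk => ?_
    rw [(mem_filter.mp hk).2, filter_filter, add_comm]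
    simp only [and_comm]
  · simp only [add_comm]

namespace Stirling

theorem stirlingSeq_pos {n : ℕ} (hn : n ≠ 0) : 0 < stirlingSeq n :=
  (Real.sqrt_pos.mpr pi_pos).trans_le (sqrt_pi_le_stirlingSeq hn)

theorem stirlingSeq_le_of_le {m n : ℕ} (hm : m ≠ 0) (hmn : m ≤ n) :
    stirlingSeq n ≤ stirlingSeq m := by
  obtain ⟨m, rfl⟩ := Nat.exists_eq_succ_of_ne_zero hm
  obtain ⟨n, rfl⟩ := Nat.exists_eq_succ_of_ne_zero (by omega : n ≠ 0)
  exact stirlingSeq'_antitone (Nat.succ_le_succ_iff.mp hmn)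

end Stirling

theorem ascPochhammer_eval_half_eq_factorial_div (N : ℕ) :
    (ascPochhammer ℝ N).eval (1 / 2) = (2 * N)! / (4 ^ N * N !) := by
  induction N with
  | zero => simp
  | succ N ih =>
    rw [ascPochhammer_succ_eval, ih, show 2 * (N + 1) = 2 * N + 1 + 1 by ring,
      Nat.factorial_succ, Nat.factorial_succ, Nat.factorial_succ]
    push_cast
    field_simp
    ring

theorem ascPochhammer_eval_half_mul_stirlingSeq {N : ℕ} (hN : N ≠ 0) :
    (ascPochhammer ℝ N).eval (1 / 2) * Stirling.stirlingSeq N =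
      √2 * Stirling.stirlingSeq (2 * N) * (N / exp 1) ^ N := by
  have hsqrt : √(2 * (2 * N : ℝ)) = √2 * √(2 * N) := Real.sqrt_mul zero_le_two _
  have hfour : (4 : ℝ) ^ N = 2 ^ (2 * N) := by rw [pow_mul]; norm_num
  simp only [ascPochhammer_eval_half_eq_factorial_div, Stirling.stirlingSeq, Nat.cast_mul,
    Nat.cast_ofNat, hsqrt, hfour]
  field_simp
  ring

theorem log_ascPochhammer_eval_half_eq {N : ℕ} (hN : N ≠ 0) :
    log ((ascPochhammer ℝ N).eval (1 / 2)) =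
      N * log N - N + log (√2 * Stirling.stirlingSeq (2 * N) / Stirling.stirlingSeq N) := by
  have hA : (ascPochhammer ℝ N).eval (1 / 2) =
      √2 * Stirling.stirlingSeq (2 * N) / Stirling.stirlingSeq N * (N / exp 1) ^ N := by
    rw [div_mul_eq_mul_div, eq_div_iff (Stirling.stirlingSeq_pos hN).ne',
      ascPochhammer_eval_half_mul_stirlingSeq hN]
  have hN' : (0 : ℝ) < N := by positivity
  have := Stirling.stirlingSeq_pos (show 2 * N ≠ 0 by omega)
  have := Stirling.stirlingSeq_pos hN
  rw [hA, log_mul (by positivity) (by positivity), log_pow, log_div hN'.ne' (exp_pos 1).ne',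
    log_exp]
  ring

theorem mul_log_sub_le_log_ascPochhammer_eval_half (N : ℕ) :
    N * log N - N ≤ log ((ascPochhammer ℝ N).eval (1 / 2)) := by
  rcases eq_or_ne N 0 with rfl | hN
  · simp
  rw [log_ascPochhammer_eval_half_eq hN, le_add_iff_nonneg_right]
  apply log_nonneg
  have hs := Stirling.stirlingSeq_pos hN
  rw [one_le_div hs]
  calc Stirling.stirlingSeq N ≤ Stirling.stirlingSeq 1 :=
        Stirling.stirlingSeq_le_of_le one_ne_zero (Nat.one_le_iff_ne_zero.mpr hN)
    _ = exp 1 / √2 := Stirling.stirlingSeq_one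
    _ ≤ √2 * √π := by
        rw [div_le_iff₀ (by positivity), mul_right_comm, Real.mul_self_sqrt zero_le_two]
        have : exp 1 / 2 ≤ √π := Real.le_sqrt_of_sq_le (by
          nlinarith [Real.exp_one_lt_d9, Real.pi_gt_three, Real.exp_pos 1])
        linarith
    _ ≤ √2 * Stirling.stirlingSeq (2 * N) := by
        gcongr; exact Stirling.sqrt_pi_le_stirlingSeq (by omega)

theorem log_ascPochhammer_eval_half_le (N : ℕ) :
    log ((ascPochhammer ℝ N).eval (1 / 2)) ≤ N * log N - N + 1 := by
  rcases eq_or_ne N 0 with rfl | hN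
  · simp
  rw [log_ascPochhammer_eval_half_eq hN, add_le_add_iff_left]
  have hs := Stirling.stirlingSeq_pos hN
  calc log (√2 * Stirling.stirlingSeq (2 * N) / Stirling.stirlingSeq N) ≤ log √2 := by
        have := Stirling.stirlingSeq_pos (show 2 * N ≠ 0 by omega)
        gcongr
        rw [div_le_iff₀ hs]
        gcongr
        exact Stirling.stirlingSeq_le_of_le hN (by omega)
    _ ≤ 1 := by
        rw [Real.log_sqrt zero_le_two]
        linarith [Real.log_two_lt_d9]

theorem sum_inv_half_add_le_three_add_log (n : ℕ) :
    ∑ k ∈ range n, (1 / 2 + k : ℝ)⁻¹ ≤ 3 + log n := by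
  rcases n with _ | n
  · simp
  have hshift : ∑ k ∈ range n, (1 / 2 + (k + 1 : ℕ) : ℝ)⁻¹ ≤ harmonic n := by
    rw [harmonic, Rat.cast_sum]
    refine sum_le_sum fun k _ => ?_
    push_cast
    exact inv_anti₀ (by positivity) (by linarith)
  have hlog : log n ≤ log (n + 1 : ℕ) := by
    rcases eq_or_ne n 0 with rfl | hn
    · simp
    exact log_le_log (by positivity) (by push_cast; linarith)
  push_cast at hshift hlog ⊢
  rw [sum_range_succ']
  norm_num
  linarith [harmonic_le_one_add_log n]

theorem log_ascPochhammer_eval_le {a : ℝ} (ha : 1 / 2 ≤ a) (n : ℕ) :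
    log ((ascPochhammer ℝ n).eval a) ≤
      log ((ascPochhammer ℝ n).eval (1 / 2)) + (a - 1 / 2) * (3 + log n) := by
  have hne : ∀ b : ℝ, 0 < b → ∀ k ∈ range n, b + k ≠ 0 := fun b hb k _ => by positivity
  have hterm : ∀ k ∈ range n,
      log (a + k) ≤ log (1 / 2 + k) + (a - 1 / 2) * (1 / 2 + k : ℝ)⁻¹ := fun k _ => by
    have hk : (0 : ℝ) < 1 / 2 + k := by positivity
    have := log_le_sub_one_of_pos (show 0 < (a + k) / (1 / 2 + k) by positivity)
    rw [log_div (by positivity) hk.ne'] at this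
    have heq : (a + k) / (1 / 2 + k) - 1 = (a - 1 / 2) * (1 / 2 + k : ℝ)⁻¹ := by
      field_simp; ring
    linarith
  rw [ascPochhammer_eval_eq_prod_range, ascPochhammer_eval_eq_prod_range,
    log_prod (hne a (by linarith)), log_prod (hne _ one_half_pos)]
  calc ∑ k ∈ range n, log (a + k)
      ≤ ∑ k ∈ range n, (log (1 / 2 + k) + (a - 1 / 2) * (1 / 2 + k : ℝ)⁻¹) :=
        sum_le_sum hterm
    _ = ∑ k ∈ range n, log (1 / 2 + k) +
          (a - 1 / 2) * ∑ k ∈ range n, (1 / 2 + k : ℝ)⁻¹ := by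
        rw [sum_add_distrib, mul_sum]
    _ ≤ _ := by
        gcongr
        exact sum_inv_half_add_le_three_add_log n

theorem sum_div_mul_log_div_eq {ι : Type*} (s : Finset ι) (c : ι → ℝ) {t : ℝ}
    (hc : ∑ i ∈ s, c i = t) (ht : t ≠ 0) :
    ∑ i ∈ s, c i / t * log (c i / t) = (∑ i ∈ s, c i * log (c i)) / t - log t := by
  have hterm : ∀ i ∈ s, c i / t * log (c i / t) = c i * log (c i) / t - c i / t * log t :=
    fun i _ => by
      rcases eq_or_ne (c i) 0 with h | h
      · simp [h]
      · rw [log_div h ht]; ring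
  rw [sum_congr rfl hterm, sum_sub_distrib, ← sum_div, ← sum_mul, ← sum_div, hc, div_self ht,
    one_mul]

theorem sum_card_fiber_eq {X : Type*} [Fintype X] [DecidableEq X] {n : ℕ} (z : Fin n → X) :
    ∑ i, (#{j | z j = i} : ℝ) = n := by
  exact_mod_cast (card_eq_sum_card_fiberwise fun k _ => mem_univ (z k)).symm.trans (card_fin n)

theorem neg_log_ktProb_le {X : Type*} [Fintype X] [DecidableEq X] [Nonempty X] {n : ℕ}
    (z : Fin n → X) :
    -log (ktProb z) ≤ n * log n - ∑ i, (#{j | z j = i} : ℝ) * log #{j | z j = i} +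
      ((Fintype.card X - 1) / 2) * (3 + log n) + 1 := by
  have hcard : (1 : ℝ) ≤ Fintype.card X := by exact_mod_cast Fintype.card_pos
  have hnum : ∑ i, (#{j | z j = i} * log #{j | z j = i} - #{j | z j = i} : ℝ) ≤
      ∑ i, log ((ascPochhammer ℝ #{j | z j = i}).eval (1 / 2)) :=
    sum_le_sum fun i _ => mul_log_sub_le_log_ascPochhammer_eval_half _
  have hden := log_ascPochhammer_eval_le (a := Fintype.card X / 2) (by linarith) n
  have hhalf := log_ascPochhammer_eval_half_le n
  rw [ktProb_eq_prod_ascPochhammer_div, log_div (prod_ne_zero_iff.mpr fun i _ =>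
      (ascPochhammer_pos _ _ one_half_pos).ne') (ascPochhammer_pos _ _ (by positivity)).ne',
    log_prod fun i _ => (ascPochhammer_pos _ _ one_half_pos).ne']
  rw [sum_sub_distrib, sum_card_fiber_eq] at hnum
  linarith

/-- **KT redundancy.** For every finite alphabet `X` there is a constant `C` (depending
only on `|X|`) such that for every `n ≥ 1` and every individual sequence `zⁿ ∈ Xⁿ`,
`−(1/n) log₂ p̂ᴷᵀ(zⁿ) ≤ H_emp(zⁿ) + ((|X|−1) log₂ n + C)/(2n)`. -/
theorem kt_redundancy {X : Type*} [Fintype X] [DecidableEq X] :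
    ∃ C : ℝ, ∀ (n : ℕ), 0 < n → ∀ z : Fin n → X,
      -(1 / (n : ℝ)) * Real.logb 2 (ktProb z) ≤
        (-∑ i : X,
            (((Finset.univ.filter (fun j : Fin n => z j = i)).card : ℝ) / n) *
              Real.logb 2 (((Finset.univ.filter (fun j : Fin n => z j = i)).card : ℝ) / n))
          + (((Fintype.card X : ℝ) - 1) * Real.logb 2 n + C) / (2 * n) := by
  refine ⟨(3 * Fintype.card X - 1) / log 2, fun n hn z => ?_⟩
  have : Nonempty X := ⟨z ⟨0, hn⟩⟩
  have hn' : (0 : ℝ) < n := by exact_mod_cast hn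
  have hentropy := sum_div_mul_log_div_eq univ _ (sum_card_fiber_eq z) hn'.ne'
  simp only [logb, ← mul_div_assoc, ← sum_div, hentropy]
  calc _ = -log (ktProb z) / (n * log 2) := by field_simp
    _ ≤ (n * log n - ∑ i, (#{j | z j = i} : ℝ) * log #{j | z j = i} +
          ((Fintype.card X - 1) / 2) * (3 + log n) + 1) / (n * log 2) := by
        gcongr
        exact neg_log_ktProb_le z
    _ = _ := by field_simp; ring
end

section
/- Let p̂^{KT(b)} be a KT(b) estimator over a finite alphabet X, i.e. p̂_k^{KT(b)}(i|z^{k−1}) = p̂_{ν_k+1}^{KT}(i|z^{ν_k}) for a nondecreasing index sequence ν_k with k − b ≤ ν_k ≤ k − 1. Then for any two sequences z^n, w^n ∈ X^n, −log ( p̂^{KT(b)}(z^n ‖ w^n) / p̂^{KT}(z^n) ) ≤ 2|X| (b + d(z^n, w^n) − 1) log(2ne), where d is Hamming distance and p̂(z^n ‖ w^n) = ∏_k p̂_k(z_k | w^{k−1}) is the probability assigned to z^n by the estimator driven by observations w^n. -/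
/-! Position by position, the KT(b) factor driven by `w` loses against the KT factor driven by
`z` only through its numerator: the count of `z k` in `w` before `ν k` is at least its count
in `z` before `k` minus `D = (b - 1) + d(z, w)`, since each of the last `k - ν k ≤ b - 1`
positions and each disagreement costs at most one occurrence; the denominator
`ν k + |X|/2 ≤ k + |X|/2` only helps. Grouping positions by symbol, the counts of a symbol
seen `N` times run through `0, 1, …, N - 1`, so its loss is at most
`∑_{j<N} log ((j + 1/2) / ((j - D)₊ + 1/2))`, a sum that telescopes to at most `D log (2n)`.
The |X| symbols together lose at most `|X| D log (2n)`. -/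

open Finset

/-- Number of occurrences of the symbol `i` among the first `m` entries of `w`. -/
def occCount {X : Type*} [DecidableEq X] {n : ℕ} (w : Fin n → X) (m : ℕ) (i : X) : ℕ :=
  (Finset.univ.filter (fun j : Fin n => (j : ℕ) < m ∧ w j = i)).card

section occCount

variable {X : Type*} [DecidableEq X] {n : ℕ}

theorem occCount_le_occCount_add_card_ne_add (z w : Fin n → X) (i : X) (k m : ℕ) :
    occCount z k i ≤ occCount w m i + #{j : Fin n | z j ≠ w j} + (k - m) := by
  have hwindow : #{j : Fin n | m ≤ j ∧ j < k} ≤ k - m := by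
    simpa using card_le_card_of_injOn (t := Ico m k) Fin.val (fun j hj => by simpa using hj)
      Fin.val_injective.injOn
  calc occCount z k i
      ≤ #(({j : Fin n | j < m ∧ w j = i} : Finset (Fin n)) ∪ ({j | z j ≠ w j} : Finset (Fin n)) ∪
          ({j : Fin n | m ≤ j ∧ j < k} : Finset (Fin n))) :=
        card_le_card fun j => by
          simp only [mem_filter, mem_univ, true_and, mem_union]
          grind
    _ ≤ occCount w m i + #{j : Fin n | z j ≠ w j} + (k - m) :=
        (card_union_le _ _).trans (add_le_add (card_union_le _ _) hwindow)

theorem occCount_lt_occCount {z : Fin n → X} {a : Fin n} {m : ℕ} (ha : (a : ℕ) < m) :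
    occCount z a (z a) < occCount z m (z a) := by
  refine card_lt_card <| (ssubset_iff_of_subset fun j hj => ?_).2 ⟨a, ?_, ?_⟩
  · simp only [mem_filter, mem_univ, true_and] at hj ⊢
    exact ⟨hj.1.trans ha, hj.2⟩
  · simpa using ha
  · simp

theorem occCount_length (z : Fin n → X) (i : X) : occCount z n i = #{j | z j = i} := by
  simp [occCount]

theorem strictMonoOn_occCount (z : Fin n → X) (i : X) :
    StrictMonoOn (fun k : Fin n => occCount z k i) ↑({k | z k = i} : Finset (Fin n)) := by
  intro a ha b _ hab
  obtain rfl : z a = i := by simpa using ha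
  exact occCount_lt_occCount hab

theorem image_occCount_filter_eq_range (z : Fin n → X) (i : X) :
    image (fun k : Fin n => occCount z k i) {k | z k = i} = range #{k | z k = i} := by
  refine eq_of_subset_of_card_le (fun x hx => ?_) ?_
  · obtain ⟨k, hk, rfl⟩ := mem_image.1 hx
    obtain rfl : z k = i := by simpa using hk
    exact mem_range.2 (occCount_length z (z k) ▸ occCount_lt_occCount k.isLt)
  · rw [card_range, card_image_of_injOn (strictMonoOn_occCount z i).injOn]

theorem sum_comp_occCount_eq {M : Type*} [AddCommMonoid M] [Fintype X] (z : Fin n → X)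
    (f : ℕ → M) :
    ∑ k : Fin n, f (occCount z k (z k)) = ∑ i, ∑ j ∈ range #{k : Fin n | z k = i}, f j := by
  rw [← sum_fiberwise univ z]
  refine sum_congr rfl fun i _ => ?_
  rw [← image_occCount_filter_eq_range, sum_image (strictMonoOn_occCount z i).injOn]
  exact sum_congr rfl fun k hk => by rw [(mem_filter.1 hk).2]

end occCount

theorem sum_range_sub_comp_tsub_le {g : ℕ → ℝ} (hg : Monotone g) (N D : ℕ) :
    ∑ j ∈ range N, (g j - g (j - D)) ≤ D * (g (N - 1) - g 0) := by
  have hrow : ∀ j, g j - g (j - D) = ∑ t ∈ range D, (g (j - t) - g (j - (t + 1))) := fun j => by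
    rw [sum_range_sub' (fun t => g (j - t)), Nat.sub_zero]
  have hcol : ∀ t, ∑ j ∈ range N, (g (j - t) - g (j - (t + 1))) = g (N - (t + 1)) - g 0 :=
    fun t => by simpa using sum_range_sub (fun j => g (j - (t + 1))) N
  -- Split each term into `D` unit steps, then telescope each step over `j`: the truncated
  -- subtraction makes the first `t + 1` terms of that column vanish.
  calc ∑ j ∈ range N, (g j - g (j - D))
      = ∑ t ∈ range D, (g (N - (t + 1)) - g 0) := by
        simp_rw [hrow]
        rw [sum_comm]
        exact sum_congr rfl fun t _ => hcol t
    _ ≤ ∑ t ∈ range D, (g (N - 1) - g 0) :=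
        sum_le_sum fun t _ => sub_le_sub_right (hg (by omega)) _
    _ = D * (g (N - 1) - g 0) := by simp [mul_sub]

open Real

theorem sum_logb_add_half_sub_le {N n : ℕ} (hn : 0 < n) (hN : N ≤ n) (D : ℕ) :
    ∑ j ∈ range N, (logb 2 (j + 1 / 2) - logb 2 ((j - D : ℕ) + 1 / 2)) ≤ D * logb 2 (2 * n) := by
  set g : ℕ → ℝ := fun j => logb 2 (j + 1 / 2)
  have hg : Monotone g := fun a b hab =>
    logb_le_logb_of_le one_lt_two (by positivity) (by gcongr)
  refine (sum_range_sub_comp_tsub_le hg N D).trans (mul_le_mul_of_nonneg_left ?_ D.cast_nonneg)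
  have hlast : ((N - 1 : ℕ) : ℝ) + 1 ≤ n := by exact_mod_cast (by omega : N - 1 + 1 ≤ n)
  calc g (N - 1) - g 0 = logb 2 (2 * (N - 1 : ℕ) + 1) := by
        rw [← logb_div (by positivity) (by positivity)]
        congr 1
        simp only [CharP.cast_eq_zero, zero_add]
        ring
    _ ≤ logb 2 (2 * n) := logb_le_logb_of_le one_lt_two (by positivity) (by linarith)

theorem logb_div_sub_logb_div_le {β a a' c s s' : ℝ} (hβ : 1 < β) (ha : 0 < a) (hc : 0 < c)
    (hca : c ≤ a') (hs' : 0 < s') (hss : s' ≤ s) :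
    logb β (a / s) - logb β (a' / s') ≤ logb β a - logb β c := by
  have hnum := logb_le_logb_of_le hβ hc hca
  have hden := logb_le_logb_of_le hβ hs' hss
  rw [logb_div ha.ne' (hs'.trans_le hss).ne', logb_div (hc.trans_le hca).ne' hs'.ne']
  linarith

theorem neg_logb_prod_div_prod {ι : Type*} (s : Finset ι) (β : ℝ) {f g : ι → ℝ}
    (hf : ∀ i ∈ s, 0 < f i) (hg : ∀ i ∈ s, 0 < g i) :
    -logb β ((∏ i ∈ s, g i) / ∏ i ∈ s, f i) = ∑ i ∈ s, (logb β (f i) - logb β (g i)) := by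
  rw [logb_div (prod_pos hg).ne' (prod_pos hf).ne', neg_sub,
    logb_prod _ _ fun i hi => (hf i hi).ne', logb_prod _ _ fun i hi => (hg i hi).ne',
    sum_sub_distrib]

theorem sum_logb_occCount_sub_le {X : Type*} [Fintype X] [DecidableEq X] {n : ℕ} (hn : 0 < n)
    (z : Fin n → X) (D : ℕ) :
    ∑ k : Fin n, (logb 2 (occCount z k (z k) + 1 / 2)
        - logb 2 ((occCount z k (z k) - D : ℕ) + 1 / 2))
      ≤ Fintype.card X * (D * logb 2 (2 * n)) := by
  calc _ = ∑ i, ∑ j ∈ range #{k : Fin n | z k = i},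
          (logb 2 (j + 1 / 2) - logb 2 ((j - D : ℕ) + 1 / 2)) :=
        sum_comp_occCount_eq z fun j => logb 2 (j + 1 / 2) - logb 2 ((j - D : ℕ) + 1 / 2)
    _ ≤ ∑ _i : X, D * logb 2 (2 * n) := sum_le_sum fun i _ =>
        sum_logb_add_half_sub_le hn ((card_le_univ _).trans_eq (Fintype.card_fin n)) D
    _ = _ := by simp

theorem noisy_ktb_excess_redundancy_general {X : Type*} [Fintype X] [DecidableEq X]
    {n b : ℕ}
    (ν : ℕ → ℕ)
    (hν_le : ∀ k < n, ν k ≤ k) (hν_ge : ∀ k < n, k + 1 ≤ ν k + b)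
    (z w : Fin n → X) :
    -Real.logb 2
        ((∏ k : Fin n, ((occCount w (ν k) (z k) : ℝ) + 1/2) /
            ((ν (k : ℕ) : ℝ) + (Fintype.card X : ℝ) / 2)) /
          (∏ k : Fin n, ((occCount z (k : ℕ) (z k) : ℝ) + 1/2) /
            ((k : ℝ) + (Fintype.card X : ℝ) / 2)))
      ≤ 2 * (Fintype.card X : ℝ) *
          ((b : ℝ) + ((Finset.univ.filter (fun k : Fin n => z k ≠ w k)).card : ℝ) - 1) *
            Real.logb 2 (2 * n * Real.exp 1) := by
  rcases n.eq_zero_or_pos with rfl | hn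
  · simp
  have hb : 1 ≤ b := by linarith [hν_le 0 hn, hν_ge 0 hn]
  have hX : 0 < Fintype.card X := Fintype.card_pos_iff.2 ⟨z ⟨0, hn⟩⟩
  set d := #{k | z k ≠ w k}
  have hden : ∀ x : ℕ, 0 < (x : ℝ) + Fintype.card X / 2 := fun x => by positivity
  have hcount : ∀ k : Fin n, occCount z k (z k) - (b - 1 + d) ≤ occCount w (ν k) (z k) :=
    fun k => by
      have := occCount_le_occCount_add_card_ne_add z w (z k) k (ν k)
      have := hν_ge k k.isLt
      omega
  rw [neg_logb_prod_div_prod _ _ (fun k _ => div_pos (by positivity) (hden _))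
    (fun k _ => div_pos (by positivity) (hden _))]
  calc _ ≤ ∑ k : Fin n, (logb 2 (occCount z k (z k) + 1 / 2)
          - logb 2 ((occCount z k (z k) - (b - 1 + d) : ℕ) + 1 / 2)) :=
        sum_le_sum fun k _ => logb_div_sub_logb_div_le one_lt_two (by positivity) (by positivity)
          (by gcongr; exact hcount k) (hden _) (by gcongr; exact hν_le k k.isLt)
    _ ≤ Fintype.card X * ((b - 1 + d : ℕ) * logb 2 (2 * n)) := sum_logb_occCount_sub_le hn z _
    _ ≤ _ := by
        have hL : 0 ≤ logb 2 (2 * n) := logb_nonneg one_lt_two (by norm_cast; omega)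
        have hLe : logb 2 (2 * n) ≤ logb 2 (2 * n * exp 1) :=
          logb_le_logb_of_le one_lt_two (by positivity)
            (le_mul_of_one_le_right (by positivity) (one_le_exp zero_le_one))
        have hmD : (0 : ℝ) ≤ Fintype.card X * (b - 1 + d : ℕ) := by positivity
        push_cast [hb] at hmD ⊢
        nlinarith [mul_le_mul_of_nonneg_left hLe hmD, mul_nonneg hmD (hL.trans hLe)]

/-- **Noisy KT(b) excess redundancy.** Let `ν` be a nondecreasing update-position
sequence with `ν k ≤ k` and `k + 1 ≤ ν k + b` (0-indexed version of
`k − b ≤ ν_k ≤ k − 1`).  Then for any `zⁿ, wⁿ ∈ Xⁿ`,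
`−log₂ ( p̂ᴷᵀ⁽ᵇ⁾(zⁿ‖wⁿ) / p̂ᴷᵀ(zⁿ) ) ≤ 2|X| (b + d(zⁿ,wⁿ) − 1) log₂(2ne)`,
where `d` is the Hamming distance, `p̂ᴷᵀ(zⁿ) = ∏ₖ (n_{z_k}(z^k) + 1/2)/(k + |X|/2)` and
`p̂ᴷᵀ⁽ᵇ⁾(zⁿ‖wⁿ) = ∏ₖ (n_{z_k}(w^{ν k}) + 1/2)/(ν k + |X|/2)`. -/
theorem noisy_ktb_excess_redundancy {X : Type*} [Fintype X] [DecidableEq X]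
    (hX : 2 ≤ Fintype.card X) {n b : ℕ} (hb : 1 ≤ b)
    (ν : ℕ → ℕ) (hν_mono : Monotone ν)
    (hν_le : ∀ k < n, ν k ≤ k) (hν_ge : ∀ k < n, k + 1 ≤ ν k + b)
    (z w : Fin n → X) :
    -Real.logb 2
        ((∏ k : Fin n, ((occCount w (ν k) (z k) : ℝ) + 1/2) /
            ((ν (k : ℕ) : ℝ) + (Fintype.card X : ℝ) / 2)) /
          (∏ k : Fin n, ((occCount z (k : ℕ) (z k) : ℝ) + 1/2) /
            ((k : ℝ) + (Fintype.card X : ℝ) / 2)))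
      ≤ 2 * (Fintype.card X : ℝ) *
          ((b : ℝ) + ((Finset.univ.filter (fun k : Fin n => z k ≠ w k)).card : ℝ) - 1) *
            Real.logb 2 (2 * n * Real.exp 1) :=
  noisy_ktb_excess_redundancy_general ν hν_le hν_ge z w
end

section
/- Let Z^n be a random sequence in a finite alphabet X and B^n a random binary sequence independent of Z^n, uniformly distributed over the set of binary sequences of length n with exactly m ones. Let Z^n↓B^n denote the subsequence of Z^n at positions where B^n has a 1. Then for any τ > 0, P( ‖p_emp(Z^n) − p_emp(Z^n↓B^n)‖_∞ > τ ) ≤ 2|X| exp(−2mτ²). -/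
/-!
Condition on `Z = z` (allowed by independence) and fix a symbol `i`. With `A` the set of
positions where `z` equals `i`, the sample count of `i` is `#(S ∩ A)` for a uniformly random
`m`-subset `S` of the positions. Expanding `(y + 1) ^ #(S ∩ A)` over subsets of `S ∩ A` and
using `C(#A, j) / C(n, j) ≤ (#A / n) ^ j` shows that its generating function is dominated by
that of a binomial variable (Hoeffding's comparison of sampling without and with replacement).
Hoeffding's lemma for a Bernoulli variable then gives the Chernoff bound `exp (-2 m τ ^ 2)` for
each tail, and a union bound over the two tails and the `|X|` symbols gives the factor `2 |X|`.
-/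

open MeasureTheory ProbabilityTheory Finset
open scoped ENNReal

theorem Nat.descFactorial_mul_pow_le_descFactorial_mul_pow {k n : ℕ} (h : k ≤ n) (j : ℕ) :
    k.descFactorial j * n ^ j ≤ n.descFactorial j * k ^ j := by
  induction j with
  | zero => simp
  | succ j ih =>
    have hstep : (k - j) * n ≤ (n - j) * k := by
      rw [Nat.sub_mul, Nat.sub_mul, Nat.mul_comm k n]
      exact Nat.sub_le_sub_left (Nat.mul_le_mul_left j h) _
    calc k.descFactorial (j + 1) * n ^ (j + 1)
        = ((k - j) * n) * (k.descFactorial j * n ^ j) := by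
          rw [Nat.descFactorial_succ, pow_succ]; ring
      _ ≤ ((n - j) * k) * (n.descFactorial j * k ^ j) := Nat.mul_le_mul hstep ih
      _ = n.descFactorial (j + 1) * k ^ (j + 1) := by
          rw [Nat.descFactorial_succ, pow_succ]; ring

theorem Nat.choose_mul_pow_le_choose_mul_pow {k n : ℕ} (h : k ≤ n) (j : ℕ) :
    k.choose j * n ^ j ≤ n.choose j * k ^ j := by
  have := Nat.descFactorial_mul_pow_le_descFactorial_mul_pow h j
  simp only [Nat.descFactorial_eq_factorial_mul_choose, mul_assoc] at this
  exact Nat.le_of_mul_le_mul_left this j.factorial_pos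

theorem Nat.cast_choose_le_choose_mul_div_pow {k n : ℕ} (h : k ≤ n) (j : ℕ) :
    (k.choose j : ℝ) ≤ n.choose j * ((k : ℝ) / n) ^ j := by
  rcases n.eq_zero_or_pos with rfl | hn
  · obtain rfl : k = 0 := Nat.le_zero.mp h
    rcases j.eq_zero_or_pos with rfl | hj <;> simp [*, Nat.choose_eq_zero_of_lt]
  rw [div_pow, mul_div_assoc', le_div_iff₀ (by positivity)]
  exact_mod_cast Nat.choose_mul_pow_le_choose_mul_pow h j

theorem Finset.sum_range_choose_mul_pow_le {x : ℝ} (hx : 0 ≤ x) (m N : ℕ) :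
    ∑ j ∈ range N, (m.choose j : ℝ) * x ^ j ≤ (x + 1) ^ m := by
  have hvanish : ∀ j ∈ range N, (m.choose (m + 1 + j) : ℝ) * x ^ (m + 1 + j) = 0 := by
    intro j _
    rw [Nat.choose_eq_zero_of_lt (by omega), Nat.cast_zero, zero_mul]
  calc ∑ j ∈ range N, (m.choose j : ℝ) * x ^ j
      ≤ ∑ j ∈ range (m + 1 + N), (m.choose j : ℝ) * x ^ j :=
        sum_le_sum_of_subset_of_nonneg (range_subset_range.mpr (by omega))
          fun _ _ _ => by positivity
    _ = (x + 1) ^ m := by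
        rw [sum_range_add, sum_eq_zero hvanish, add_zero, add_pow]
        simp [mul_comm]

/-- Hoeffding's lemma for a Bernoulli variable of mean `p`. -/
theorem one_sub_add_mul_exp_le_exp {p : ℝ} (hp : p ∈ unitInterval) (t : ℝ) :
    1 - p + p * Real.exp t ≤ Real.exp (p * t + t ^ 2 / 8) := by
  let μ := bernoulliMeasure true false ⟨p, hp⟩
  let X : Bool → ℝ := fun b => if b then 1 else 0
  have hmean : μ[X] = p := by simp [μ, X, integral_bernoulliMeasure]
  have hmgf : mgf X μ t = 1 - p + p * Real.exp t := by
    simp [μ, X, mgf, integral_bernoulliMeasure]; ring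
  have hsub := (hasSubgaussianMGF_of_mem_Icc (X := X) (μ := μ) (a := 0) (b := 1)
    (measurable_of_finite X).aemeasurable (ae_of_all _ fun b => by cases b <;> simp [X])).mgf_le t
  have hshift : mgf (fun b => X b - p) μ t = Real.exp (t * -p) * (1 - p + p * Real.exp t) := by
    simpa only [← sub_eq_neg_add, hmgf] using mgf_const_add (X := X) (μ := μ) (t := t) (-p)
  rw [hmean, hshift] at hsub
  have hc : ((‖(1 : ℝ) - 0‖₊ / 2) ^ 2 : NNReal) * t ^ 2 / 2 = t ^ 2 / 8 := by
    norm_num [← NNReal.coe_pow]; ring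
  calc 1 - p + p * Real.exp t
      = Real.exp (p * t) * (Real.exp (t * -p) * (1 - p + p * Real.exp t)) := by
        rw [← mul_assoc, ← Real.exp_add, show p * t + t * -p = 0 by ring, Real.exp_zero,
          one_mul]
    _ ≤ Real.exp (p * t) * Real.exp (t ^ 2 / 8) := by rw [← hc]; gcongr
    _ = Real.exp (p * t + t ^ 2 / 8) := (Real.exp_add _ _).symm

theorem Finset.sum_powerset_pow {α R : Type*} [CommSemiring R] (y : R) (s : Finset α) :
    ∑ t ∈ s.powerset, y ^ #t = (y + 1) ^ #s := by
  simpa using sum_pow_mul_eq_add_pow y 1 s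

section Hypergeometric

variable {α : Type*} [DecidableEq α]

theorem Finset.sum_pow_card_inter_eq {R : Type*} [CommSemiring R] (𝒮 : Finset (Finset α))
    (A : Finset α) (y : R) :
    ∑ S ∈ 𝒮, (y + 1) ^ #(S ∩ A) =
      ∑ T ∈ A.powerset, #{S ∈ 𝒮 | T ⊆ S} * y ^ #T := by
  have hsub : ∀ S : Finset α, {T ∈ A.powerset | T ⊆ S} = (S ∩ A).powerset := by
    intro S; ext T; simp only [mem_filter, mem_powerset, subset_inter_iff]; tauto
  simp_rw [card_filter, Nat.cast_sum, sum_mul, Nat.cast_ite]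
  rw [sum_comm]
  refine sum_congr rfl fun S _ => ?_
  simp only [Nat.cast_one, Nat.cast_zero, ite_mul, one_mul, zero_mul]
  rw [← sum_filter, hsub, sum_powerset_pow]

variable [Fintype α]

-- Stated multiplicatively so that it also covers `#T > m`, where both sides vanish.
theorem Finset.card_filter_superset_mul_choose (T : Finset α) (m : ℕ) :
    #{S ∈ powersetCard m univ | T ⊆ S} * (Fintype.card α).choose #T =
      (Fintype.card α).choose m * m.choose #T := by
  by_cases hT : #T ≤ m
  · have hcount :
        #{S ∈ powersetCard m univ | T ⊆ S} = (Fintype.card α - #T).choose (m - #T) := by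
      rw [← card_compl, ← card_powersetCard]
      refine card_nbij' (· \ T) (· ∪ T) ?_ ?_ ?_ ?_
      · intro S hS
        simp only [mem_coe, mem_filter, mem_powersetCard] at hS ⊢
        refine ⟨fun x hx => mem_compl.mpr (mem_sdiff.mp hx).2, ?_⟩
        rw [card_sdiff_of_subset hS.2, hS.1.2]
      · intro S hS
        simp only [mem_coe, mem_powersetCard, subset_compl_iff_disjoint_right] at hS
        simp only [mem_coe, mem_filter, mem_powersetCard]
        refine ⟨⟨subset_univ _, ?_⟩, subset_union_right⟩
        rw [card_union_of_disjoint hS.1, hS.2]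
        omega
      · intro S hS
        exact sdiff_union_of_subset (mem_filter.mp hS).2
      · intro S hS
        exact union_sdiff_cancel_right
          (subset_compl_iff_disjoint_right.mp (mem_powersetCard.mp hS).1)
    rw [hcount, Nat.choose_mul hT, mul_comm]
  · rw [Nat.choose_eq_zero_of_lt (not_le.mp hT), mul_zero, mul_eq_zero]
    left
    refine card_eq_zero.mpr (filter_eq_empty_iff.mpr fun S hS hTS => hT ?_)
    exact (mem_powersetCard.mp hS).2 ▸ card_le_card hTS

theorem Finset.sum_pow_card_inter_le (A : Finset α) (m : ℕ) {y : ℝ} (hy : 0 ≤ y) :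
    ∑ S ∈ powersetCard m (univ : Finset α), (y + 1) ^ #(S ∩ A) ≤
      (Fintype.card α).choose m * (#A / Fintype.card α * y + 1) ^ m := by
  set n := Fintype.card α
  have hchoose_pos : ∀ {t}, t ≤ n → (0 : ℝ) < n.choose t := fun ht =>
    Nat.cast_pos.mpr (Nat.choose_pos ht)
  have hcount : ∀ T ∈ A.powerset,
      (#{S ∈ powersetCard m univ | T ⊆ S} : ℝ) * y ^ #T =
        n.choose m * m.choose #T / n.choose #T * y ^ #T := by
    intro T _
    congr 1
    rw [eq_div_iff (hchoose_pos (card_le_univ T)).ne']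
    exact_mod_cast card_filter_superset_mul_choose T m
  rw [sum_pow_card_inter_eq, sum_congr rfl hcount,
    sum_powerset_apply_card fun t => (n.choose m * m.choose t / n.choose t : ℝ) * y ^ t]
  calc _ ≤ ∑ t ∈ range (#A + 1), (n.choose m : ℝ) * (m.choose t * (#A / n * y) ^ t) := by
        refine sum_le_sum fun t ht => ?_
        have htn : t ≤ n := (Nat.lt_succ_iff.mp (mem_range.mp ht)).trans (card_le_univ A)
        rw [nsmul_eq_mul]
        calc ((#A).choose t : ℝ) * (n.choose m * m.choose t / n.choose t * y ^ t)
            ≤ (n.choose t * (#A / n : ℝ) ^ t) *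
                (n.choose m * m.choose t / n.choose t * y ^ t) := by
              gcongr
              exact Nat.cast_choose_le_choose_mul_div_pow (card_le_univ A) t
          _ = _ := by
              have := (hchoose_pos htn).ne'
              field_simp
              ring
    _ ≤ (n.choose m : ℝ) * (#A / n * y + 1) ^ m := by
        rw [← mul_sum]
        gcongr
        exact sum_range_choose_mul_pow_le (by positivity) m _

theorem Finset.card_hypergeometric_upper_tail_le (A : Finset α) (m : ℕ) {τ : ℝ}
    (hτ : 0 ≤ τ) :
    (#{S ∈ powersetCard m (univ : Finset α) |
        m * (#A / Fintype.card α + τ) ≤ #(S ∩ A)} : ℝ) ≤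
      (Fintype.card α).choose m * Real.exp (-2 * m * τ ^ 2) := by
  set n := Fintype.card α
  set p : ℝ := #A / n
  have hp : p ∈ unitInterval :=
    ⟨by positivity, div_le_one_of_le₀ (by exact_mod_cast card_le_univ A) (by positivity)⟩
  -- `l = 4τ` minimises `l ^ 2 / 8 - l τ`, the exponent of the resulting Chernoff bound
  set l := 4 * τ with hl
  have hy : 0 ≤ Real.exp l - 1 := sub_nonneg.mpr (Real.one_le_exp (by positivity))
  have hmarkov : (#{S ∈ powersetCard m univ | m * (p + τ) ≤ #(S ∩ A)} : ℝ) *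
      Real.exp (l * (m * (p + τ))) ≤
        ∑ S ∈ powersetCard m univ, (Real.exp l - 1 + 1) ^ #(S ∩ A) := by
    rw [sub_add_cancel, ← nsmul_eq_mul]
    calc _ ≤ ∑ S ∈ powersetCard m univ with m * (p + τ) ≤ #(S ∩ A),
          Real.exp l ^ #(S ∩ A) := by
          refine card_nsmul_le_sum _ _ _ fun S hS => ?_
          rw [← Real.exp_nat_mul, mul_comm _ l]
          gcongr
          exact (mem_filter.mp hS).2
      _ ≤ _ := sum_le_sum_of_subset_of_nonneg (filter_subset _ _) fun _ _ _ => by positivity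
  have hmgf : ∑ S ∈ powersetCard m univ, (Real.exp l - 1 + 1) ^ #(S ∩ A) ≤
      n.choose m * Real.exp (m * (p * l + l ^ 2 / 8)) := by
    refine (sum_pow_card_inter_le A m hy).trans ?_
    rw [Real.exp_nat_mul]
    gcongr
    show p * (Real.exp l - 1) + 1 ≤ _
    linarith [one_sub_add_mul_exp_le_exp hp l]
  rw [← le_div_iff₀ (Real.exp_pos _)] at hmarkov
  calc _ ≤ _ := hmarkov.trans (div_le_div_of_nonneg_right hmgf (Real.exp_pos _).le)
    _ = _ := by rw [mul_div_assoc, ← Real.exp_sub, hl]; ring_nf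

theorem Finset.card_hypergeometric_tail_le (A : Finset α) {m : ℕ} (hm : 0 < m) {τ : ℝ}
    (hτ : 0 ≤ τ) :
    (#{S ∈ powersetCard m (univ : Finset α) |
        τ < |(#A : ℝ) / Fintype.card α - #(S ∩ A) / m|} : ℝ) ≤
      2 * (Fintype.card α).choose m * Real.exp (-2 * m * τ ^ 2) := by
  set n := Fintype.card α
  have hm' : (0 : ℝ) < m := Nat.cast_pos.mpr hm
  have hsub : {S ∈ powersetCard m (univ : Finset α) | τ < |(#A : ℝ) / n - #(S ∩ A) / m|} ⊆
      {S ∈ powersetCard m (univ : Finset α) | m * (#A / n + τ) ≤ #(S ∩ A)} ∪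
        {S ∈ powersetCard m (univ : Finset α) | m * (#Aᶜ / n + τ) ≤ #(S ∩ Aᶜ)} := by
    intro S hS
    obtain ⟨hSm, hdev⟩ := mem_filter.mp hS
    have hcard : #S = m := (mem_powersetCard.mp hSm).2
    have hn : (0 : ℝ) < n := by exact_mod_cast hm.trans_le (hcard ▸ card_le_univ S)
    have hcompl : (#Aᶜ : ℝ) / n = 1 - #A / n := by
      rw [card_compl, Nat.cast_sub (card_le_univ A), sub_div, div_self hn.ne']
    have hinter : (#(S ∩ Aᶜ) : ℝ) = m - #(S ∩ A) := by
      rw [← hcard, ← card_inter_add_card_sdiff S A, sdiff_eq_inter_compl]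
      push_cast; ring
    rw [mem_union, mem_filter, mem_filter, hcompl, hinter]
    rcases lt_abs.mp hdev with h | h
    · right
      refine ⟨hSm, ?_⟩
      have := mul_lt_mul_of_pos_left h hm'
      rw [mul_sub, mul_div_cancel₀ _ hm'.ne'] at this
      linarith
    · left
      refine ⟨hSm, ?_⟩
      have := mul_lt_mul_of_pos_left h hm'
      rw [neg_sub, mul_sub, mul_div_cancel₀ _ hm'.ne'] at this
      linarith
  refine (Nat.cast_le.mpr ((card_le_card hsub).trans (card_union_le _ _))).trans ?_
  rw [Nat.cast_add, two_mul, add_mul]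
  exact add_le_add (card_hypergeometric_upper_tail_le A m hτ)
    (card_hypergeometric_upper_tail_le Aᶜ m hτ)

end Hypergeometric

theorem Finset.card_filter_boolFun_le {ι : Type*} [Fintype ι] [DecidableEq ι] (m : ℕ)
    (P : Finset ι → Prop) [DecidablePred P] :
    #{b : ι → Bool | #{k | b k = true} = m ∧ P {k | b k = true}} ≤
      #{S ∈ powersetCard m univ | P S} := by
  refine card_le_card_of_injOn (fun b => ({k | b k = true} : Finset ι)) (fun b hb => ?_)
    fun b₁ _ b₂ _ h => ?_
  · simpa [mem_powersetCard] using hb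
  · funext k
    simpa using congrArg (k ∈ ·) h

theorem card_sample_deviation_mul_inv_le {ι X : Type*} [Fintype ι] [DecidableEq ι]
    [DecidableEq X] (z : ι → X) (i : X) {m : ℕ} (hm : 0 < m) {τ : ℝ} (hτ : 0 ≤ τ) :
    (#{b : ι → Bool | #{k | b k = true} = m ∧ τ < |(#{k | z k = i} : ℝ) / Fintype.card ι -
        #{k | b k = true ∧ z k = i} / m|} : ℝ≥0∞) *
      ((Fintype.card ι).choose m : ℝ≥0∞)⁻¹ ≤
      ENNReal.ofReal (2 * Real.exp (-2 * m * τ ^ 2)) := by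
  have hcount := (Nat.cast_le (α := ℝ)).mpr (card_filter_boolFun_le m _) |>.trans
    (card_hypergeometric_tail_le {k | z k = i} hm hτ)
  simp only [← filter_and] at hcount
  rw [← div_eq_mul_inv]
  refine ENNReal.div_le_of_le_mul ?_
  rw [← ENNReal.ofReal_natCast, ← ENNReal.ofReal_natCast ((Fintype.card ι).choose m),
    ← ENNReal.ofReal_mul (by positivity)]
  exact ENNReal.ofReal_le_ofReal (by linarith)

theorem measure_le_of_indepFun_of_uniform {Ω α β : Type*} [MeasurableSpace Ω] {μ : Measure Ω}
    [IsProbabilityMeasure μ] [Fintype α] [MeasurableSpace α] [MeasurableSingletonClass α]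
    [MeasurableSpace β] [MeasurableSingletonClass β] {Z : Ω → α} {B : Ω → β}
    (hZ : Measurable Z) (hindep : IndepFun Z B μ) {T : Finset β} {c : ℝ≥0∞}
    (hunif : ∀ b ∈ T, μ (B ⁻¹' {b}) = c) (hT : ∀ᵐ ω ∂μ, B ω ∈ T)
    (P : α → β → Prop) [∀ z, DecidablePred (P z)] {ε : ℝ≥0∞}
    (hε : ∀ z, #{b ∈ T | P z b} * c ≤ ε) :
    μ {ω | P (Z ω) (B ω)} ≤ ε := by
  calc μ {ω | P (Z ω) (B ω)}
      ≤ μ (⋃ z, ⋃ b ∈ {b ∈ T | P z b}, Z ⁻¹' {z} ∩ B ⁻¹' {b}) := by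
        refine measure_mono_ae (hT.mono fun ω hω hP => ?_)
        change ω ∈ ⋃ z, _
        simp only [Set.mem_iUnion, mem_filter]
        exact ⟨Z ω, B ω, ⟨hω, hP⟩, rfl, rfl⟩
    _ ≤ ∑ z, ∑ b ∈ {b ∈ T | P z b}, μ (Z ⁻¹' {z} ∩ B ⁻¹' {b}) :=
        (measure_iUnion_fintype_le _ _).trans
          (sum_le_sum fun z _ => measure_biUnion_finset_le _ _)
    _ = ∑ z, μ (Z ⁻¹' {z}) * (#{b ∈ T | P z b} * c) := by
        refine sum_congr rfl fun z _ => ?_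
        rw [← nsmul_eq_mul, ← sum_const, mul_sum]
        refine sum_congr rfl fun b hb => ?_
        rw [hindep.measure_inter_preimage_eq_mul _ _ (measurableSet_singleton z)
          (measurableSet_singleton b), hunif b (mem_filter.mp hb).1]
    _ ≤ ∑ z, μ (Z ⁻¹' {z}) * ε := by gcongr with z; exact hε z
    _ = ε := by
        rw [← sum_mul, sum_measure_preimage_singleton _ fun z _ => hZ (measurableSet_singleton z),
          coe_univ, Set.preimage_univ, measure_univ, one_mul]

theorem sampling_without_replacement_general
    {Ω : Type*} [MeasurableSpace Ω] (μ : Measure Ω) [IsProbabilityMeasure μ]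
    {X : Type*} [Fintype X] [Nonempty X] [DecidableEq X]
    [MeasurableSpace X] [MeasurableSingletonClass X]
    {n m : ℕ} (hm : 1 ≤ m)
    (Z : Ω → Fin n → X) (B : Ω → Fin n → Bool)
    (hZ : Measurable Z) (hB : Measurable B)
    (hindep : IndepFun Z B μ)
    (hunif : ∀ b : Fin n → Bool,
      (Finset.univ.filter (fun k => b k = true)).card = m →
        μ {ω | B ω = b} = ((n.choose m : ℝ≥0∞))⁻¹)
    (hsupp : μ {ω | (Finset.univ.filter (fun k => B ω k = true)).card = m} = 1)
    (τ : ℝ) (hτ : 0 < τ) :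
    μ {ω | (Finset.univ.sup' Finset.univ_nonempty fun i : X =>
        |((Finset.univ.filter (fun k => Z ω k = i)).card : ℝ) / n -
          ((Finset.univ.filter (fun k => B ω k = true ∧ Z ω k = i)).card : ℝ) / m|) > τ}
      ≤ ENNReal.ofReal (2 * (Fintype.card X : ℝ) * Real.exp (-2 * m * τ ^ 2)) := by
  set T : Finset (Fin n → Bool) := {b | #{k | b k = true} = m}
  have hT : ∀ᵐ ω ∂μ, B ω ∈ T := by
    refine (ae_iff_measure_eq (hB T.finite_toSet.measurableSet).nullMeasurableSet).mpr ?_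
    simpa [T] using hsupp
  let dev (z : Fin n → X) (b : Fin n → Bool) (i : X) : ℝ :=
    |(#{k | z k = i} : ℝ) / n - #{k | b k = true ∧ z k = i} / m|
  let E (i : X) : Set Ω := {ω | τ < dev (Z ω) (B ω) i}
  have hE : ∀ i, μ (E i) ≤ ENNReal.ofReal (2 * Real.exp (-2 * m * τ ^ 2)) := fun i =>
    measure_le_of_indepFun_of_uniform hZ hindep (fun b hb => hunif b (mem_filter.mp hb).2) hT
      (fun z b => τ < dev z b i) fun z => by
        have := card_sample_deviation_mul_inv_le z i hm hτ.le
        rw [Fintype.card_fin] at this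
        rwa [filter_filter]
  calc _ = μ (⋃ i, E i) := by congr 1; ext ω; simp [E, dev, lt_sup'_iff]
    _ ≤ ∑ i, μ (E i) := measure_iUnion_fintype_le _ _
    _ ≤ ∑ _i : X, ENNReal.ofReal (2 * Real.exp (-2 * m * τ ^ 2)) := sum_le_sum fun i _ => hE i
    _ = _ := by
        rw [sum_const, card_univ, nsmul_eq_mul, ← ENNReal.ofReal_natCast,
          ← ENNReal.ofReal_mul (Nat.cast_nonneg _)]
        ring_nf

/-- **Sampling without replacement.** Let `Z` be a random sequence in a finite alphabet `X`
and `B` a random binary sequence, independent of `Z`, uniformly distributed over the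
binary sequences of length `n` with exactly `m` ones.  Then for any `τ > 0` the
probability that the empirical distribution of `Z` and that of the sample `Z↓B`
(the subsequence of `Z` at the positions of the ones of `B`) differ by more than `τ`
in sup norm is at most `2|X| exp(−2mτ²)`. -/
theorem sampling_without_replacement
    {Ω : Type*} [MeasurableSpace Ω] (μ : Measure Ω) [IsProbabilityMeasure μ]
    {X : Type*} [Fintype X] [Nonempty X] [DecidableEq X]
    [MeasurableSpace X] [MeasurableSingletonClass X]
    {n m : ℕ} (hm : 1 ≤ m) (hmn : m ≤ n)
    (Z : Ω → Fin n → X) (B : Ω → Fin n → Bool)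
    (hZ : Measurable Z) (hB : Measurable B)
    (hindep : IndepFun Z B μ)
    (hunif : ∀ b : Fin n → Bool,
      (Finset.univ.filter (fun k => b k = true)).card = m →
        μ {ω | B ω = b} = ((n.choose m : ℝ≥0∞))⁻¹)
    (hsupp : μ {ω | (Finset.univ.filter (fun k => B ω k = true)).card = m} = 1)
    (τ : ℝ) (hτ : 0 < τ) :
    μ {ω | (Finset.univ.sup' Finset.univ_nonempty fun i : X =>
        |((Finset.univ.filter (fun k => Z ω k = i)).card : ℝ) / n -
          ((Finset.univ.filter (fun k => B ω k = true ∧ Z ω k = i)).card : ℝ) / m|) > τ}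
      ≤ ENNReal.ofReal (2 * (Fintype.card X : ℝ) * Real.exp (-2 * m * τ ^ 2)) :=
  sampling_without_replacement_general μ hm Z B hZ hB hindep hunif hsupp τ hτ
end

section
/- Let Z^n take values in a finite alphabet X and let B^n be a {0,1}-valued sequence such that B_{k+1} ~ Bernoulli(q) and B_{k+1} is independent of (B^k, Z^{k+1}) for every k < n. Define α(B^n) = n₁(B^n)/(nq), where n₁(B^n) is the number of ones in B^n. Then for any τ > 0, P( ‖p_emp(Z^n) − α(B^n) · p_emp(Z^n↓B^n)‖_∞ > τ ) ≤ 2|X| exp(−n τ² q² / 2). -/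
open MeasureTheory ProbabilityTheory Finset
open scoped ENNReal NNReal

/-! For a fixed symbol `i`, `n` times the `i`-th coordinate of
`p_emp(Zⁿ) − α(Bⁿ) · p_emp(Zⁿ↓Bⁿ)` is `∑ₖ 1{Zₖ = i} (1 − Bₖ / q)`. The factor `1 − Bₖ / q` has
mean zero, takes values in an interval of length `1 / q`, and is independent of the earlier
terms together with the gate `1{Zₖ = i}`. Splitting off the last term and applying Hoeffding's
lemma to it shows inductively that the sum has a sub-Gaussian mgf with variance proxy
`n / (4 q²)`. A two-sided Chernoff bound and a union bound over the alphabet then give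
`2 |X| exp (−2 n τ² q²)`, which is stronger than the claim. -/

lemma Real.exp_mul_le_one_sub_add_mul_exp {a : ℝ} (ha : a ∈ Set.Icc (0 : ℝ) 1) (x : ℝ) :
    Real.exp (a * x) ≤ 1 - a + a * Real.exp x := by
  have h := rpow_one_add_le_one_add_mul_self
    (by linarith [Real.exp_pos x] : -1 ≤ Real.exp x - 1) ha.1 ha.2
  rw [add_sub_cancel, ← Real.exp_mul, mul_comm] at h
  linarith

lemma mul_le_abs_of_lt_abs_div {x τ : ℝ} {n : ℕ} (hτ : 0 < τ) (h : τ < |x / n|) : n * τ ≤ |x| := by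
  rcases n.eq_zero_or_pos with rfl | hn
  · simp only [CharP.cast_eq_zero, div_zero, abs_zero] at h
    linarith
  · rw [abs_div, Nat.abs_cast, lt_div_iff₀ (by positivity)] at h
    linarith

namespace ProbabilityTheory

variable {Ω : Type*} {mΩ : MeasurableSpace Ω} {μ : Measure Ω}

/-- Here `I₀ = E[exp (t F) (1 - χ)]` and `I₁ = E[exp (t F) χ]`: convexity gives
`exp (t χ D) ≤ 1 - χ + χ exp (t D)`, and independence turns `E[exp (t F) χ exp (t D)]`
into `I₁ * E[exp (t D)]`. -/
lemma mgf_add_mul_le_of_indepFun {F χ D : Ω → ℝ} {t : ℝ}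
    (hF : Integrable (fun ω ↦ Real.exp (t * F ω)) μ)
    (hD : Integrable (fun ω ↦ Real.exp (t * D ω)) μ) (hFm : AEMeasurable F μ)
    (hDm : AEMeasurable D μ) (hχ : ∀ ω, χ ω ∈ Set.Icc (0 : ℝ) 1) (hχm : AEMeasurable χ μ)
    (hindep : IndepFun (fun ω ↦ (F ω, χ ω)) D μ) :
    Integrable (fun ω ↦ Real.exp (t * (F ω + χ ω * D ω))) μ ∧
      ∃ I₀ I₁ : ℝ, 0 ≤ I₀ ∧ 0 ≤ I₁ ∧ I₀ + I₁ = mgf F μ t ∧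
        mgf (fun ω ↦ F ω + χ ω * D ω) μ t ≤ I₀ + I₁ * mgf D μ t := by
  set eF := fun ω ↦ Real.exp (t * F ω)
  set eD := fun ω ↦ Real.exp (t * D ω)
  have hbound (ω : Ω) : ‖χ ω‖ ≤ 1 ∧ ‖1 - χ ω‖ ≤ 1 := by
    obtain ⟨h₀, h₁⟩ := hχ ω
    simp only [Real.norm_eq_abs, abs_le]
    constructor <;> constructor <;> linarith
  have hint₀ : Integrable (fun ω ↦ eF ω * (1 - χ ω)) μ :=
    hF.mul_bdd (by fun_prop) (ae_of_all _ fun ω ↦ (hbound ω).2)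
  have hint₁ : Integrable (fun ω ↦ eF ω * χ ω) μ :=
    hF.mul_bdd hχm.aestronglyMeasurable (ae_of_all _ fun ω ↦ (hbound ω).1)
  have hindep' : IndepFun (fun ω ↦ eF ω * χ ω) eD μ :=
    hindep.comp (φ := fun p : ℝ × ℝ ↦ Real.exp (t * p.1) * p.2)
      (ψ := fun x ↦ Real.exp (t * x)) (by fun_prop) (by fun_prop)
  have hint₂ : Integrable (fun ω ↦ eF ω * χ ω * eD ω) μ := hindep'.integrable_mul hint₁ hD
  have hpoint (ω : Ω) :
      Real.exp (t * (F ω + χ ω * D ω)) ≤ eF ω * (1 - χ ω) + eF ω * χ ω * eD ω := by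
    calc Real.exp (t * (F ω + χ ω * D ω)) = eF ω * Real.exp (χ ω * (t * D ω)) := by
          rw [← Real.exp_add]; ring_nf
      _ ≤ eF ω * (1 - χ ω + χ ω * eD ω) := by
          gcongr
          exact Real.exp_mul_le_one_sub_add_mul_exp (hχ ω) _
      _ = eF ω * (1 - χ ω) + eF ω * χ ω * eD ω := by ring
  have hmeas : AEStronglyMeasurable (fun ω ↦ Real.exp (t * (F ω + χ ω * D ω))) μ :=
    (by fun_prop : AEMeasurable (fun ω ↦ Real.exp (t * (F ω + χ ω * D ω))) μ).aestronglyMeasurable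
  refine ⟨(hint₀.add hint₂).mono' hmeas (ae_of_all _ fun ω ↦ ?_), ?_⟩
  · rw [Real.norm_of_nonneg (Real.exp_pos _).le]
    exact hpoint ω
  refine ⟨∫ ω, eF ω * (1 - χ ω) ∂μ, ∫ ω, eF ω * χ ω ∂μ,
    integral_nonneg fun ω ↦ mul_nonneg (Real.exp_pos _).le (by linarith [(hχ ω).2]),
    integral_nonneg fun ω ↦ mul_nonneg (Real.exp_pos _).le (hχ ω).1, ?_, ?_⟩
  · rw [← integral_add hint₀ hint₁, mgf]
    congr 1 with ω
    ring
  have hmul := hindep'.integral_mul_eq_mul_integral hint₁.aestronglyMeasurable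
    hD.aestronglyMeasurable
  calc mgf (fun ω ↦ F ω + χ ω * D ω) μ t
      ≤ ∫ ω, (eF ω * (1 - χ ω) + eF ω * χ ω * eD ω) ∂μ :=
        integral_mono_of_nonneg (ae_of_all _ fun _ ↦ (Real.exp_pos _).le)
          (hint₀.add hint₂) (ae_of_all _ hpoint)
    _ = _ := by
        rw [integral_add hint₀ hint₂, mgf, ← hmul]
        rfl

namespace HasSubgaussianMGF

lemma add_mul_of_indepFun {F χ D : Ω → ℝ} {cF cD : ℝ≥0} (hF : HasSubgaussianMGF F cF μ)
    (hD : HasSubgaussianMGF D cD μ) (hχ : ∀ ω, χ ω ∈ Set.Icc (0 : ℝ) 1)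
    (hχm : AEMeasurable χ μ) (hindep : IndepFun (fun ω ↦ (F ω, χ ω)) D μ) :
    HasSubgaussianMGF (fun ω ↦ F ω + χ ω * D ω) (cF + cD) μ := by
  have key (t : ℝ) := mgf_add_mul_le_of_indepFun (hF.integrable_exp_mul t)
    (hD.integrable_exp_mul t) hF.aemeasurable hD.aemeasurable hχ hχm hindep
  refine ⟨fun t ↦ (key t).1, fun t ↦ ?_⟩
  obtain ⟨I₀, I₁, hI₀, hI₁, hsplit, hle⟩ := (key t).2
  have hE : 1 ≤ Real.exp (cD * t ^ 2 / 2) := Real.one_le_exp (by positivity)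
  calc mgf (fun ω ↦ F ω + χ ω * D ω) μ t ≤ I₀ + I₁ * mgf D μ t := hle
    _ ≤ Real.exp (cD * t ^ 2 / 2) * (I₀ + I₁) := by
        nlinarith [mul_le_mul_of_nonneg_left (hD.mgf_le t) hI₁]
    _ ≤ Real.exp (cD * t ^ 2 / 2) * Real.exp (cF * t ^ 2 / 2) := by
        rw [hsplit]
        gcongr
        exact hF.mgf_le t
    _ = Real.exp ((cF + cD : ℝ≥0) * t ^ 2 / 2) := by
        rw [← Real.exp_add]; push_cast; ring_nf

lemma sum_mul_of_indepFun [IsProbabilityMeasure μ] {n : ℕ} {χ D : Fin n → Ω → ℝ}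
    {c : Fin n → ℝ≥0} (hD : ∀ k, HasSubgaussianMGF (D k) (c k) μ)
    (hχ : ∀ k ω, χ k ω ∈ Set.Icc (0 : ℝ) 1) (hχm : ∀ k, AEMeasurable (χ k) μ)
    (hindep : ∀ k, IndepFun (fun ω ↦ (∑ j ∈ Iio k, χ j ω * D j ω, χ k ω)) (D k) μ) :
    HasSubgaussianMGF (fun ω ↦ ∑ k, χ k ω * D k ω) (∑ k, c k) μ := by
  suffices h : ∀ m ≤ n, HasSubgaussianMGF
      (fun ω ↦ ∑ k : Fin n with k.val < m, χ k ω * D k ω) (∑ k : Fin n with k.val < m, c k) μ by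
    simpa using h n le_rfl
  intro m
  induction m with
  | zero => simp
  | succ m ih =>
    intro hm
    set k : Fin n := ⟨m, hm⟩
    have hIio : ({j | j.val < m} : Finset (Fin n)) = Iio k := by
      ext j; simp [Fin.lt_def, k]
    have hsucc : ({j | j.val < m + 1} : Finset (Fin n)) = insert k (Iio k) := by
      ext j
      simp only [mem_filter, mem_univ, true_and, mem_insert, mem_Iio, Fin.ext_iff, Fin.lt_def, k]
      omega
    have := (ih (by omega)).add_mul_of_indepFun (hD k) (hχ k) (hχm k)
    rw [hIio] at this
    rw [hsucc]
    simp only [sum_insert notMem_Iio_self, add_comm (χ k _ * D k _), add_comm (c k)]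
    exact this (hindep k)

lemma measure_abs_ge_le [IsFiniteMeasure μ] {X : Ω → ℝ} {c : ℝ≥0}
    (h : HasSubgaussianMGF X c μ) {ε : ℝ} (hε : 0 ≤ ε) :
    μ {ω | ε ≤ |X ω|} ≤ ENNReal.ofReal (2 * Real.exp (-ε ^ 2 / (2 * c))) := by
  have hsub : {ω | ε ≤ |X ω|} ⊆ {ω | ε ≤ X ω} ∪ {ω | ε ≤ (-X) ω} := fun ω (hω : ε ≤ |X ω|) ↦ by
    rcases le_abs'.1 hω with h | h
    · right; show ε ≤ -X ω; linarith
    · left; exact h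
  set b := Real.exp (-ε ^ 2 / (2 * c))
  calc μ {ω | ε ≤ |X ω|} ≤ μ {ω | ε ≤ X ω} + μ {ω | ε ≤ (-X) ω} :=
        (measure_mono hsub).trans (measure_union_le _ _)
    _ ≤ ENNReal.ofReal b + ENNReal.ofReal b := by
        rw [← ofReal_measureReal, ← ofReal_measureReal]
        gcongr
        exacts [h.measure_ge_le hε, h.neg.measure_ge_le hε]
    _ = ENNReal.ofReal (2 * b) := by
        rw [two_mul, ENNReal.ofReal_add (by positivity) (by positivity)]

end HasSubgaussianMGF

end ProbabilityTheory

/-- `1 − b / q`, the factor of the paper's martingale increment `1{Z_j = i} (1 − q⁻¹ B_j)`. -/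
noncomputable def selectionResidual (q : ℝ) (b : Bool) : ℝ := 1 - if b then q⁻¹ else 0

section

variable {Ω : Type*} [MeasurableSpace Ω] {μ : Measure Ω}

lemma hasSubgaussianMGF_selectionResidual [IsProbabilityMeasure μ] {b : Ω → Bool}
    (hb : Measurable b) {q : ℝ} (hq : 0 < q) (hber : μ {ω | b ω = true} = ENNReal.ofReal q) :
    HasSubgaussianMGF (fun ω ↦ selectionResidual q (b ω)) ((‖q⁻¹‖₊ / 2) ^ 2) μ := by
  have hset : MeasurableSet {ω | b ω = true} := hb (measurableSet_singleton true)
  have hind : (fun ω ↦ selectionResidual q (b ω))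
      = fun ω ↦ 1 - {ω | b ω = true}.indicator (fun _ ↦ q⁻¹) ω := by
    ext ω; by_cases h : b ω <;> simp [selectionResidual, Set.indicator, h]
  have hmean : μ[fun ω ↦ selectionResidual q (b ω)] = 0 := by
    rw [hind, integral_sub (integrable_const _) ((integrable_const _).indicator hset),
      integral_indicator_const _ hset, measureReal_def, hber, ENNReal.toReal_ofReal hq.le]
    simp [hq.ne']
  have hrange (ω : Ω) : selectionResidual q (b ω) ∈ Set.Icc (1 - q⁻¹) 1 := by
    by_cases h : b ω <;> simp [selectionResidual, hq.le, h]
  simpa using hasSubgaussianMGF_of_mem_Icc_of_integral_eq_zero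
    (X := fun ω ↦ selectionResidual q (b ω))
    (measurable_of_countable (selectionResidual q) |>.comp hb).aemeasurable
    (ae_of_all _ hrange) hmean

lemma sum_ite_mul_selectionResidual {X : Type*} [DecidableEq X] {n : ℕ} (q : ℝ)
    (z : Fin n → X) (b : Fin n → Bool) (i : X) :
    ∑ k, (if z k = i then 1 else 0) * selectionResidual q (b k)
      = (#{k | z k = i} : ℝ) - #{k | b k = true ∧ z k = i} / q := by
  rw [div_eq_mul_inv, natCast_card_filter, natCast_card_filter, sum_mul, ← sum_sub_distrib]
  refine sum_congr rfl fun k _ ↦ ?_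
  by_cases hz : z k = i <;> by_cases hb : b k <;> simp [selectionResidual, hz, hb]

lemma indepFun_partialSum_selectionResidual {X : Type*} [Countable X] [DecidableEq X]
    [MeasurableSpace X] [MeasurableSingletonClass X] {n : ℕ} {Z : Ω → Fin n → X}
    {B : Ω → Fin n → Bool} (q : ℝ) (i : X) {k : Fin n}
    (hindep : IndepFun (fun ω => B ω k)
        (fun ω => ((fun j : Fin n => if j < k then B ω j else false),
                   (fun j : Fin n => if j ≤ k then Z ω j else Z ω k))) μ) :
    IndepFun (fun ω ↦ (∑ j ∈ Iio k, (if Z ω j = i then 1 else 0) * selectionResidual q (B ω j),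
        if Z ω k = i then (1 : ℝ) else 0)) (fun ω ↦ selectionResidual q (B ω k)) μ := by
  let G : (Fin n → Bool) × (Fin n → X) → ℝ × ℝ := fun p ↦
    (∑ j ∈ Iio k, (if p.2 j = i then 1 else 0) * selectionResidual q (p.1 j),
      if p.2 k = i then 1 else 0)
  convert (hindep.comp (measurable_of_countable (selectionResidual q))
    (measurable_of_countable G)).symm using 1
  ext ω
  · refine sum_congr rfl fun j hj ↦ ?_
    have hjk : j < k := mem_Iio.1 hj
    simp [hjk, hjk.le]
  · simp [G]
  · rfl

end

theorem causally_independent_sampling_general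
    {Ω : Type*} [MeasurableSpace Ω] (μ : Measure Ω) [IsProbabilityMeasure μ]
    {X : Type*} [Fintype X] [Nonempty X] [DecidableEq X]
    [MeasurableSpace X] [MeasurableSingletonClass X]
    {n : ℕ} (q : ℝ) (hq0 : 0 < q)
    (Z : Ω → Fin n → X) (B : Ω → Fin n → Bool)
    (hZ : Measurable Z) (hB : Measurable B)
    (hber : ∀ k : Fin n, μ {ω | B ω k = true} = ENNReal.ofReal q)
    (hindep : ∀ k : Fin n,
      IndepFun (fun ω => B ω k)
        (fun ω => ((fun j : Fin n => if j < k then B ω j else false),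
                   (fun j : Fin n => if j ≤ k then Z ω j else Z ω k))) μ)
    (τ : ℝ) (hτ : 0 < τ) :
    μ {ω | (Finset.univ.sup' Finset.univ_nonempty fun i : X =>
        |((Finset.univ.filter (fun k => Z ω k = i)).card : ℝ) / n -
          ((Finset.univ.filter (fun k => B ω k = true ∧ Z ω k = i)).card : ℝ) / (n * q)|) > τ}
      ≤ ENNReal.ofReal (2 * (Fintype.card X : ℝ) * Real.exp (-(n * τ ^ 2 * q ^ 2) / 2)) := by
  set c : ℝ≥0 := ∑ _k : Fin n, (‖q⁻¹‖₊ / 2) ^ 2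
  set S : X → Ω → ℝ := fun i ω ↦
    ∑ k, (if Z ω k = i then 1 else 0) * selectionResidual q (B ω k)
  have hS (i : X) : HasSubgaussianMGF (S i) c μ :=
    HasSubgaussianMGF.sum_mul_of_indepFun
      (fun k ↦ hasSubgaussianMGF_selectionResidual ((measurable_pi_apply k).comp hB) hq0 (hber k))
      (fun k ω ↦ by by_cases h : Z ω k = i <;> simp [h])
      (fun k ↦ (measurable_of_countable (fun z : X ↦ if z = i then (1 : ℝ) else 0)).comp
        ((measurable_pi_apply k).comp hZ) |>.aemeasurable)
      (fun k ↦ indepFun_partialSum_selectionResidual q i (hindep k))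
  have hexp : -(n * τ) ^ 2 / (2 * c) ≤ -(n * τ ^ 2 * q ^ 2) / 2 := by
    have hc : (c : ℝ) = n * (q⁻¹ / 2) ^ 2 := by simp [c, abs_of_pos hq0]
    rcases eq_or_ne n 0 with rfl | hn
    · simp
    rw [hc]
    field_simp
    norm_num
  calc _ ≤ μ (⋃ i, {ω | n * τ ≤ |S i ω|}) := measure_mono fun ω hω ↦ by
          obtain ⟨i, -, hi⟩ := (lt_sup'_iff _).1 (show τ < _ from hω)
          rw [div_mul_eq_div_div_swap, ← sub_div, ← sum_ite_mul_selectionResidual] at hi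
          exact Set.mem_iUnion.2 ⟨i, mul_le_abs_of_lt_abs_div hτ hi⟩
    _ ≤ ∑ i, μ {ω | n * τ ≤ |S i ω|} := measure_iUnion_fintype_le _ _
    _ ≤ ∑ _i : X, ENNReal.ofReal (2 * Real.exp (-(n * τ) ^ 2 / (2 * c))) :=
        sum_le_sum fun i _ ↦ (hS i).measure_abs_ge_le (by positivity)
    _ ≤ _ := by
        rw [sum_const, card_univ, nsmul_eq_mul, ← ENNReal.ofReal_natCast,
          ← ENNReal.ofReal_mul (by positivity), ← mul_assoc, mul_comm (Fintype.card X : ℝ)]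
        gcongr

/-- **Causally independent sampling.** Let `Z` take values in a finite alphabet `X` and let
`B` be a `{0,1}`-valued sequence with `B_{k} ~ Ber(q)`, each `B_k` independent of
`(B^{<k}, Z^{≤k})`.  With the α-normalized sample empirical distribution
`i ↦ #{k : B_k = 1 ∧ Z_k = i} / (nq)`, for any `τ > 0`,
`P(‖p_emp(Zⁿ) − α(Bⁿ)·p_emp(Zⁿ↓Bⁿ)‖_∞ > τ) ≤ 2|X| exp(−nτ²q²/2)`. -/
theorem causally_independent_sampling
    {Ω : Type*} [MeasurableSpace Ω] (μ : Measure Ω) [IsProbabilityMeasure μ]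
    {X : Type*} [Fintype X] [Nonempty X] [DecidableEq X]
    [MeasurableSpace X] [MeasurableSingletonClass X]
    {n : ℕ} (q : ℝ) (hq0 : 0 < q) (hq1 : q ≤ 1)
    (Z : Ω → Fin n → X) (B : Ω → Fin n → Bool)
    (hZ : Measurable Z) (hB : Measurable B)
    (hber : ∀ k : Fin n, μ {ω | B ω k = true} = ENNReal.ofReal q)
    (hindep : ∀ k : Fin n,
      IndepFun (fun ω => B ω k)
        (fun ω => ((fun j : Fin n => if j < k then B ω j else false),
                   (fun j : Fin n => if j ≤ k then Z ω j else Z ω k))) μ)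
    (τ : ℝ) (hτ : 0 < τ) :
    μ {ω | (Finset.univ.sup' Finset.univ_nonempty fun i : X =>
        |((Finset.univ.filter (fun k => Z ω k = i)).card : ℝ) / n -
          ((Finset.univ.filter (fun k => B ω k = true ∧ Z ω k = i)).card : ℝ) / (n * q)|) > τ}
      ≤ ENNReal.ofReal (2 * (Fintype.card X : ℝ) * Real.exp (-(n * τ ^ 2 * q ^ 2) / 2)) :=
  causally_independent_sampling_general μ q hq0 Z B hZ hB hber hindep τ hτ
end

section
/- Let p and q be probability distributions over a finite alphabet X with p having strictly positive entries, and let β ∈ (0,1] be such that p + β^{−1}(q − p) is a probability distribution with strictly positive entries. Then the derivative with respect to β of R(β) := β·( log|X| − H( p + β^{−1}(q − p) ) ) satisfies dR/dβ ≤ log|X| − H(p) − D(p ‖ q), where D is the Kullback–Leibler divergence (base 2). -/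
/-!
Write `r = p + β⁻¹ (q - p)`. Differentiating `β ↦ r` gives `-β⁻¹ (r - p)`, and since `∑ (r - p) = 0`
the derivative of the rate collapses to `log₂|X| + ∑ p log₂ r`, while the right-hand side is
`log₂|X| + ∑ p log₂ q`. Now `q = β r + (1 - β) p`, so concavity of `log` gives
`∑ p log q ≥ β ∑ p log r + (1 - β) ∑ p log p`, and Gibbs' inequality `∑ p log r ≤ ∑ p log p`
finishes the proof.
-/

open Finset Real

section CrossEntropy

variable {ι : Type*} {s : Finset ι} {p q r : ι → ℝ}

theorem mul_log_sub_mul_log_le_sub {a b : ℝ} (ha : 0 < a) (hb : 0 < b) :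
    a * log b - a * log a ≤ b - a := by
  have h := mul_le_mul_of_nonneg_left (log_le_sub_one_of_pos (div_pos hb ha)) ha.le
  rwa [log_div hb.ne' ha.ne', mul_sub, mul_sub, mul_div_cancel₀ _ ha.ne', mul_one] at h

theorem sum_mul_log_le_sum_mul_log_self (hp : ∀ i ∈ s, 0 < p i) (hr : ∀ i ∈ s, 0 < r i)
    (hsum : ∑ i ∈ s, r i ≤ ∑ i ∈ s, p i) :
    ∑ i ∈ s, p i * log (r i) ≤ ∑ i ∈ s, p i * log (p i) := by
  have h := sum_le_sum fun i hi => mul_log_sub_mul_log_le_sub (hp i hi) (hr i hi)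
  simp only [sum_sub_distrib] at h
  linarith

theorem sum_mul_log_le_sum_mul_log_of_eq_mix (hp : ∀ i ∈ s, 0 < p i) (hr : ∀ i ∈ s, 0 < r i)
    (hsum : ∑ i ∈ s, r i ≤ ∑ i ∈ s, p i) {β : ℝ} (hβ0 : 0 ≤ β) (hβ1 : β ≤ 1)
    (hq : ∀ i ∈ s, q i = β * r i + (1 - β) * p i) :
    ∑ i ∈ s, p i * log (r i) ≤ ∑ i ∈ s, p i * log (q i) := by
  have hconcave : ∀ i ∈ s,
      β * (p i * log (r i)) + (1 - β) * (p i * log (p i)) ≤ p i * log (q i) := by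
    intro i hi
    have h := strictConcaveOn_log_Ioi.concaveOn.2 (hr i hi) (hp i hi) hβ0 (sub_nonneg.2 hβ1)
      (by ring)
    simp only [smul_eq_mul, ← hq i hi] at h
    nlinarith [mul_le_mul_of_nonneg_left h (hp i hi).le]
  have h := sum_le_sum hconcave
  rw [sum_add_distrib, ← mul_sum, ← mul_sum] at h
  nlinarith [mul_nonneg (sub_nonneg.2 hβ1)
    (sub_nonneg.2 (sum_mul_log_le_sum_mul_log_self hp hr hsum))]

theorem sum_mul_logb_sub_sum_mul_logb_div (b : ℝ) (hp : ∀ i ∈ s, p i ≠ 0)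
    (hq : ∀ i ∈ s, q i ≠ 0) :
    ∑ i ∈ s, p i * logb b (p i) - ∑ i ∈ s, p i * logb b (p i / q i)
      = ∑ i ∈ s, p i * logb b (q i) := by
  rw [← sum_sub_distrib]
  refine sum_congr rfl fun i hi => ?_
  rw [logb_div (hp i hi) (hq i hi)]
  ring

end CrossEntropy

theorem hasDerivAt_mul_logb {b x : ℝ} (hx : x ≠ 0) :
    HasDerivAt (fun t => t * logb b t) ((log x + 1) / log b) x := by
  simpa only [logb, mul_div_assoc] using (hasDerivAt_mul_log hx).div_const (log b)

theorem hasDerivAt_mul_add_sum_mul_logb {ι : Type*} [Fintype ι] (p q : ι → ℝ) (a C : ℝ)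
    {β : ℝ} (hβ : β ≠ 0) (hsum : ∑ x, q x = ∑ x, p x)
    (hpos : ∀ x, p x + β⁻¹ * (q x - p x) ≠ 0) :
    HasDerivAt
      (fun b => b * (C + ∑ x, (p x + b⁻¹ * (q x - p x)) * logb a (p x + b⁻¹ * (q x - p x))))
      (C + ∑ x, p x * logb a (p x + β⁻¹ * (q x - p x))) β := by
  have hterm : ∀ x, HasDerivAt
      (fun b => (p x + b⁻¹ * (q x - p x)) * logb a (p x + b⁻¹ * (q x - p x)))
      ((log (p x + β⁻¹ * (q x - p x)) + 1) / log a * (-(β ^ 2)⁻¹ * (q x - p x))) β := fun x =>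
    HasDerivAt.comp (h₂ := fun t => t * logb a t) β (hasDerivAt_mul_logb (hpos x))
      (((hasDerivAt_inv hβ).mul_const (q x - p x)).const_add (p x))
  refine ((hasDerivAt_id β).mul
    ((HasDerivAt.fun_sum (u := univ) fun x _ => hterm x).const_add C)).congr_deriv ?_
  have hβ_inv : β * (β ^ 2)⁻¹ = β⁻¹ := by field_simp
  have hterm_eq : ∀ x, (p x + β⁻¹ * (q x - p x)) * logb a (p x + β⁻¹ * (q x - p x))
      + β * ((log (p x + β⁻¹ * (q x - p x)) + 1) / log a * (-(β ^ 2)⁻¹ * (q x - p x)))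
      = p x * logb a (p x + β⁻¹ * (q x - p x)) - β⁻¹ * (log a)⁻¹ * (q x - p x) := by
    intro x
    simp only [logb, div_eq_mul_inv]
    linear_combination (-(log (p x + β⁻¹ * (q x - p x)) + 1) * (log a)⁻¹ * (q x - p x)) * hβ_inv
  have hdiff : ∑ x, (q x - p x) = 0 := by rw [sum_sub_distrib, hsum, sub_self]
  rw [id_eq, one_mul, add_assoc, mul_sum, ← sum_add_distrib, sum_congr rfl fun x _ => hterm_eq x,
    sum_sub_distrib, ← mul_sum, hdiff, mul_zero, sub_zero]

theorem rate_derivative_bound_general {X : Type*} [Fintype X]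
    (p q : X → ℝ)
    (hp : ∀ x, 0 < p x) (hpsum : ∑ x, p x = 1)
    (hqsum : ∑ x, q x = 1)
    (β : ℝ) (hβ0 : 0 < β) (hβ1 : β ≤ 1)
    (hperm : ∀ x, 0 < p x + β⁻¹ * (q x - p x)) :
    deriv (fun b : ℝ => b * (Real.logb 2 (Fintype.card X) -
        (-∑ x, (p x + b⁻¹ * (q x - p x)) * Real.logb 2 (p x + b⁻¹ * (q x - p x))))) β
      ≤ Real.logb 2 (Fintype.card X) - (-∑ x, p x * Real.logb 2 (p x))
          - ∑ x, p x * Real.logb 2 (p x / q x) := by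
  set r := fun x => p x + β⁻¹ * (q x - p x) with hr
  have hr_sum : ∑ x, r x = ∑ x, p x := by
    simp only [hr, sum_add_distrib, ← mul_sum, sum_sub_distrib, hpsum, hqsum, sub_self,
      mul_zero, add_zero]
  have hq_mix : ∀ x, q x = β * r x + (1 - β) * p x := fun x => by
    simp only [hr]
    field_simp
    ring
  have hq_pos : ∀ x, 0 < q x := fun x => hq_mix x ▸
    add_pos_of_pos_of_nonneg (mul_pos hβ0 (hperm x)) (mul_nonneg (sub_nonneg.2 hβ1) (hp x).le)
  have hcross : ∑ x, p x * log (r x) ≤ ∑ x, p x * log (q x) :=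
    sum_mul_log_le_sum_mul_log_of_eq_mix (fun x _ => hp x) (fun x _ => hperm x) hr_sum.le
      hβ0.le hβ1 fun x _ => hq_mix x
  simp only [sub_neg_eq_add]
  rw [(hasDerivAt_mul_add_sum_mul_logb p q 2 _ hβ0.ne' (hqsum.trans hpsum.symm)
    fun x => (hperm x).ne').deriv, add_sub_assoc,
    sum_mul_logb_sub_sum_mul_logb_div 2 (fun x _ => (hp x).ne') fun x _ => (hq_pos x).ne']
  simp only [logb, mul_div_assoc', ← sum_div]
  gcongr

/-- **Derivative bound for the discarding rate function.** Let `p, q` be probability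
distributions over a finite alphabet `X`, `p` strictly positive, and `β ∈ (0,1]` with
`p + β⁻¹(q − p)` a strictly positive probability distribution.  Then the derivative at `β`
of `R(β) = β (log₂|X| − H(p + β⁻¹(q − p)))` satisfies
`R'(β) ≤ log₂|X| − H(p) − D(p‖q)`. -/
theorem rate_derivative_bound {X : Type*} [Fintype X] [Nonempty X]
    (p q : X → ℝ)
    (hp : ∀ x, 0 < p x) (hpsum : ∑ x, p x = 1)
    (hq : ∀ x, 0 ≤ q x) (hqsum : ∑ x, q x = 1)
    (β : ℝ) (hβ0 : 0 < β) (hβ1 : β ≤ 1)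
    (hperm : ∀ x, 0 < p x + β⁻¹ * (q x - p x)) :
    deriv (fun b : ℝ => b * (Real.logb 2 (Fintype.card X) -
        (-∑ x, (p x + b⁻¹ * (q x - p x)) * Real.logb 2 (p x + b⁻¹ * (q x - p x))))) β
      ≤ Real.logb 2 (Fintype.card X) - (-∑ x, p x * Real.logb 2 (p x))
          - ∑ x, p x * Real.logb 2 (p x / q x) :=
  rate_derivative_bound_general p q hp hpsum hqsum β hβ0 hβ1 hperm
end

section
/- For probability distributions p, r over a finite alphabet X with all entries strictly positive, and a ∈ (0,1] such that p + a(r − p) has strictly positive entries, the derivative of the entropy along the segment satisfies (d/da) H(p + a(r − p)) = (1/a) · ( H(p + a(r−p)) − H(p) − D( p ‖ p + a(r−p) ) ). -/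
/-!
Termwise, `d/dt [q log q] = (r - p) (log q + 1 / ln 2)` for `q = p + t (r - p)`, and the constant
part sums to zero because `∑ p = ∑ r`. Multiplying what is left, `∑ (r - p) log q`, by `a` gives
`∑ q log q - ∑ p log q` since `a (r - p) = q - p`, and `∑ p log q = ∑ p log p - D(p ‖ q)`.
-/

open Finset

namespace Real

lemma mul_logb_div_of_ne_zero {b x y : ℝ} (hy : y ≠ 0) :
    x * logb b (x / y) = x * logb b x - x * logb b y := by
  rcases eq_or_ne x 0 with rfl | hx
  · simp
  · rw [logb_div hx hy, mul_sub]

lemma hasDerivAt_mul_logb {b x : ℝ} (hx : x ≠ 0) :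
    HasDerivAt (fun x ↦ x * logb b x) (logb b x + 1 / log b) x := by
  have hf : (fun x ↦ x * logb b x) = fun x ↦ x * log x / log b := by
    ext y; rw [← log_div_log, mul_div_assoc]
  rw [hf, ← log_div_log, ← add_div]
  exact (hasDerivAt_mul_log hx).div_const (log b)

lemma hasDerivAt_mul_logb_affine {b c d t : ℝ} (h : c + t * d ≠ 0) :
    HasDerivAt (fun s ↦ (c + s * d) * logb b (c + s * d))
      (d * logb b (c + t * d) + d / log b) t := by
  have hline : HasDerivAt (fun s ↦ c + s * d) d t := (hasDerivAt_mul_const d).const_add c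
  refine ((hasDerivAt_mul_logb (b := b) h).comp t hline).congr_deriv ?_
  ring

end Real

open Real

section Segment

variable {X : Type*} [Fintype X] (p r : X → ℝ)

lemma hasDerivAt_sum_mul_logb_segment {b a : ℝ} (hsum : ∑ x, p x = ∑ x, r x)
    (hq : ∀ x, p x + a * (r x - p x) ≠ 0) :
    HasDerivAt (fun t ↦ ∑ x, (p x + t * (r x - p x)) * logb b (p x + t * (r x - p x)))
      (∑ x, (r x - p x) * logb b (p x + a * (r x - p x))) a := by
  have hzero : ∑ x, (r x - p x) = 0 := by rw [sum_sub_distrib, hsum, sub_self]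
  refine (HasDerivAt.fun_sum (u := univ) fun x _ ↦
    hasDerivAt_mul_logb_affine (b := b) (hq x)).congr_deriv ?_
  rw [sum_add_distrib, ← sum_div, hzero, zero_div, add_zero]

lemma mul_sum_mul_logb_segment {b a : ℝ} (hq : ∀ x, p x + a * (r x - p x) ≠ 0) :
    a * ∑ x, (r x - p x) * logb b (p x + a * (r x - p x))
      = ∑ x, (p x + a * (r x - p x)) * logb b (p x + a * (r x - p x))
        - ∑ x, p x * logb b (p x)
        + ∑ x, p x * logb b (p x / (p x + a * (r x - p x))) := by
  have hsplit : ∀ x, a * ((r x - p x) * logb b (p x + a * (r x - p x)))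
      = (p x + a * (r x - p x)) * logb b (p x + a * (r x - p x))
        - p x * logb b (p x + a * (r x - p x)) := fun x ↦ by ring
  simp only [mul_sum, hsplit, mul_logb_div_of_ne_zero (hq _), sum_sub_distrib]
  ring

end Segment

theorem entropy_deriv_along_segment_general {X : Type*} [Fintype X]
    (p r : X → ℝ)
    (hpsum : ∑ x, p x = 1)
    (hrsum : ∑ x, r x = 1)
    (a : ℝ) (ha0 : 0 < a)
    (hpos : ∀ x, 0 < p x + a * (r x - p x)) :
    HasDerivAt
      (fun t : ℝ => -∑ x, (p x + t * (r x - p x)) * Real.logb 2 (p x + t * (r x - p x)))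
      ((1 / a) *
        ((-∑ x, (p x + a * (r x - p x)) * Real.logb 2 (p x + a * (r x - p x)))
          - (-∑ x, p x * Real.logb 2 (p x))
          - ∑ x, p x * Real.logb 2 (p x / (p x + a * (r x - p x)))))
      a := by
  have hq : ∀ x, p x + a * (r x - p x) ≠ 0 := fun x ↦ (hpos x).ne'
  refine (hasDerivAt_sum_mul_logb_segment p r (hpsum.trans hrsum.symm) hq).neg.congr_deriv ?_
  have hid := mul_sum_mul_logb_segment (b := 2) p r hq
  rw [one_div, eq_inv_mul_iff_mul_eq₀ ha0.ne']
  linear_combination -hid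

/-- **Entropy derivative along a segment.** For strictly positive probability distributions
`p, r` over a finite alphabet `X` and `a ∈ (0,1]` with `p + a(r − p)` strictly positive,
`(d/da) H(p + a(r − p)) = (1/a)(H(p + a(r−p)) − H(p) − D(p ‖ p + a(r−p)))`. -/
theorem entropy_deriv_along_segment {X : Type*} [Fintype X] [Nonempty X]
    (p r : X → ℝ)
    (hp : ∀ x, 0 < p x) (hpsum : ∑ x, p x = 1)
    (hr : ∀ x, 0 < r x) (hrsum : ∑ x, r x = 1)
    (a : ℝ) (ha0 : 0 < a) (ha1 : a ≤ 1)
    (hpos : ∀ x, 0 < p x + a * (r x - p x)) :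
    HasDerivAt
      (fun t : ℝ => -∑ x, (p x + t * (r x - p x)) * Real.logb 2 (p x + t * (r x - p x)))
      ((1 / a) *
        ((-∑ x, (p x + a * (r x - p x)) * Real.logb 2 (p x + a * (r x - p x)))
          - (-∑ x, p x * Real.logb 2 (p x))
          - ∑ x, p x * Real.logb 2 (p x / (p x + a * (r x - p x)))))
      a :=
  entropy_deriv_along_segment_general p r hpsum hrsum a ha0 hpos
end

section
/- Let p and q be probability distributions over a finite alphabet X and λ ∈ [0,1]. Then H( λq + (1−λ)p ) ≤ H(p) + 3|X| λ log(2/λ), where for λ = 0 the right-hand side is interpreted as H(p). -/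
open Finset

/-!
Since `x ↦ -x log x` is subadditive, the entropy of the mixture is at most the
binary entropy `h(λ)` plus `λ H(q) + (1 - λ) H(p)`. The bounds `-x log x ≤ 1 - x` give
`h(λ) ≤ λ log (1/λ) + λ` and `H(q) ≤ |X| - 1`, and everything beyond `H(p)` is then
absorbed into `3 |X| λ log (2/λ)` because `log (2/λ) ≥ log 2 > 1/2`.
-/

namespace Real

lemma negMulLog_add_le {a b : ℝ} (ha : 0 ≤ a) (hb : 0 ≤ b) :
    negMulLog (a + b) ≤ negMulLog a + negMulLog b := by
  rcases ha.eq_or_lt with rfl | ha'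
  · simp
  rcases hb.eq_or_lt with rfl | hb'
  · simp
  have hla : log a ≤ log (a + b) := log_le_log ha' (by linarith)
  have hlb : log b ≤ log (a + b) := log_le_log hb' (by linarith)
  simp only [negMulLog, neg_mul]
  nlinarith [mul_le_mul_of_nonneg_left hla ha, mul_le_mul_of_nonneg_left hlb hb]

lemma binEntropy_le_negMulLog_add_self {l : ℝ} (hl : l ≤ 1) :
    binEntropy l ≤ negMulLog l + l := by
  have h := negMulLog_le_one_sub_self (x := 1 - l) (by linarith)
  rw [binEntropy_eq_negMulLog_add_negMulLog_one_sub]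
  linarith

lemma negMulLog_add_mul_le_mul_log_two_div {l n : ℝ} (hl0 : 0 ≤ l) (hl1 : l ≤ 1) (hn : 1 ≤ n) :
    negMulLog l + n * l ≤ 3 * n * l * log (2 / l) := by
  rcases hl0.eq_or_lt with rfl | hl0
  · simp
  have hlog : log 2 ≤ log (2 / l) :=
    log_le_log two_pos (by rw [le_div_iff₀ hl0]; linarith)
  have hhalf : 1 / 2 < log (2 / l) := by linarith [log_two_gt_d9]
  have hneg : negMulLog l ≤ l * log (2 / l) := by
    rw [negMulLog, log_div two_ne_zero hl0.ne']
    linarith [mul_nonneg hl0.le (log_nonneg one_le_two)]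
  have hlL : 0 ≤ l * log (2 / l) := by positivity
  have hnL : l * log (2 / l) ≤ n * (l * log (2 / l)) := le_mul_of_one_le_left hlL hn
  have hnl : 0 ≤ n * l * (2 * log (2 / l) - 1) := by
    have : 0 < 2 * log (2 / l) - 1 := by linarith
    positivity
  linarith

section Finset

variable {ι : Type*} {s : Finset ι} {p q : ι → ℝ}

lemma sum_negMulLog_const_mul (hq : ∑ i ∈ s, q i = 1) (c : ℝ) :
    ∑ i ∈ s, negMulLog (c * q i) = negMulLog c + c * ∑ i ∈ s, negMulLog (q i) := by
  simp only [negMulLog_mul, sum_add_distrib, ← sum_mul, ← mul_sum, hq, one_mul]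

lemma sum_negMulLog_le_card_sub_one (hq : ∀ i ∈ s, 0 ≤ q i) (hqsum : ∑ i ∈ s, q i = 1) :
    ∑ i ∈ s, negMulLog (q i) ≤ #s - 1 := by
  calc ∑ i ∈ s, negMulLog (q i) ≤ ∑ i ∈ s, (1 - q i) :=
        sum_le_sum fun i hi ↦ negMulLog_le_one_sub_self (hq i hi)
    _ = #s - 1 := by simp [sum_sub_distrib, hqsum]

lemma sum_negMulLog_mix_le (hp : ∀ i ∈ s, 0 ≤ p i) (hpsum : ∑ i ∈ s, p i = 1)
    (hq : ∀ i ∈ s, 0 ≤ q i) (hqsum : ∑ i ∈ s, q i = 1) {l : ℝ} (hl0 : 0 ≤ l) (hl1 : l ≤ 1) :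
    ∑ i ∈ s, negMulLog (l * q i + (1 - l) * p i) ≤
      binEntropy l + l * ∑ i ∈ s, negMulLog (q i) + (1 - l) * ∑ i ∈ s, negMulLog (p i) := by
  calc ∑ i ∈ s, negMulLog (l * q i + (1 - l) * p i)
      ≤ ∑ i ∈ s, (negMulLog (l * q i) + negMulLog ((1 - l) * p i)) :=
        sum_le_sum fun i hi ↦
          negMulLog_add_le (mul_nonneg hl0 (hq i hi)) (mul_nonneg (by linarith) (hp i hi))
    _ = binEntropy l + l * ∑ i ∈ s, negMulLog (q i) + (1 - l) * ∑ i ∈ s, negMulLog (p i) := by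
        rw [sum_add_distrib, sum_negMulLog_const_mul hqsum, sum_negMulLog_const_mul hpsum,
          binEntropy_eq_negMulLog_add_negMulLog_one_sub]
        ring

lemma sum_negMulLog_mix_le_add (hp : ∀ i ∈ s, 0 ≤ p i) (hpsum : ∑ i ∈ s, p i = 1)
    (hq : ∀ i ∈ s, 0 ≤ q i) (hqsum : ∑ i ∈ s, q i = 1) {l : ℝ} (hl0 : 0 ≤ l) (hl1 : l ≤ 1) :
    ∑ i ∈ s, negMulLog (l * q i + (1 - l) * p i) ≤
      ∑ i ∈ s, negMulLog (p i) + 3 * #s * l * log (2 / l) := by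
  have hcard : (1 : ℝ) ≤ #s := by
    exact_mod_cast (nonempty_of_sum_ne_zero (hqsum ▸ one_ne_zero)).card_pos
  have hHp : 0 ≤ ∑ i ∈ s, negMulLog (p i) :=
    sum_nonneg fun i hi ↦ negMulLog_nonneg (hp i hi) ((single_le_sum hp hi).trans hpsum.le)
  have hHq := mul_le_mul_of_nonneg_left (sum_negMulLog_le_card_sub_one hq hqsum) hl0
  calc ∑ i ∈ s, negMulLog (l * q i + (1 - l) * p i)
      ≤ binEntropy l + l * ∑ i ∈ s, negMulLog (q i) + (1 - l) * ∑ i ∈ s, negMulLog (p i) :=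
        sum_negMulLog_mix_le hp hpsum hq hqsum hl0 hl1
    _ ≤ ∑ i ∈ s, negMulLog (p i) + (negMulLog l + #s * l) := by
        linarith [binEntropy_le_negMulLog_add_self hl1, mul_nonneg hl0 hHp]
    _ ≤ ∑ i ∈ s, negMulLog (p i) + 3 * #s * l * log (2 / l) := by
        gcongr
        exact negMulLog_add_mul_le_mul_log_two_div hl0 hl1 hcard

lemma neg_sum_mul_logb (b : ℝ) (f : ι → ℝ) :
    -∑ i ∈ s, f i * logb b (f i) = (∑ i ∈ s, negMulLog (f i)) / log b := by
  rw [sum_div, ← sum_neg_distrib]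
  refine sum_congr rfl fun i _ ↦ ?_
  rw [logb, negMulLog]
  ring

end Finset

end Real

theorem entropy_mixture_bound_general {X : Type*} [Fintype X]
    (p q : X → ℝ)
    (hp : ∀ x, 0 ≤ p x) (hpsum : ∑ x, p x = 1)
    (hq : ∀ x, 0 ≤ q x) (hqsum : ∑ x, q x = 1)
    (l : ℝ) (hl0 : 0 ≤ l) (hl1 : l ≤ 1) :
    (-∑ x, (l * q x + (1 - l) * p x) * Real.logb 2 (l * q x + (1 - l) * p x))
      ≤ (-∑ x, p x * Real.logb 2 (p x)) +
          3 * (Fintype.card X : ℝ) * l * Real.logb 2 (2 / l) := by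
  rw [Real.neg_sum_mul_logb, Real.neg_sum_mul_logb, Real.logb, mul_div_assoc', ← add_div]
  exact div_le_div_of_nonneg_right
    (Real.sum_negMulLog_mix_le_add (fun x _ ↦ hp x) hpsum (fun x _ ↦ hq x) hqsum hl0 hl1)
    (Real.log_nonneg one_le_two)

/-- **Entropy of a mixture.** For probability distributions `p, q` over a finite alphabet `X`
and `λ ∈ [0,1]`, `H(λq + (1−λ)p) ≤ H(p) + 3|X| λ log₂(2/λ)` (at `λ = 0` the extra term
vanishes, by the Lean conventions `2/0 = 0` and `log₂ 0 = 0`). -/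
theorem entropy_mixture_bound {X : Type*} [Fintype X] [Nonempty X]
    (p q : X → ℝ)
    (hp : ∀ x, 0 ≤ p x) (hpsum : ∑ x, p x = 1)
    (hq : ∀ x, 0 ≤ q x) (hqsum : ∑ x, q x = 1)
    (l : ℝ) (hl0 : 0 ≤ l) (hl1 : l ≤ 1) :
    (-∑ x, (l * q x + (1 - l) * p x) * Real.logb 2 (l * q x + (1 - l) * p x))
      ≤ (-∑ x, p x * Real.logb 2 (p x)) +
          3 * (Fintype.card X : ℝ) * l * Real.logb 2 (2 / l) :=
  entropy_mixture_bound_general p q hp hpsum hq hqsum l hl0 hl1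
end

section
/- Let p_d and p be probability distributions over a finite alphabet X with |X| ≥ 2, and let p_u be the uniform distribution. If ‖p − p_u‖_∞ ≥ 2|X| · ‖p_d − p_u‖_∞^{1/2}, then log|X| − H(p_d) − D(p_d ‖ p) ≤ 0 (when D(p_d‖p) is finite). -/
open Finset Real

/-! With `u = 1/|X|`, the quantity to bound is `∑ pd log (p / u) / log 2`. Bounding
`log t ≤ 2 (√t - 1)` termwise and splitting `pd = u + (pd - u)` gives
`∑ pd log (p / u) ≤ 2 ∑ (pd - u) √(p / u) - H²(p, u)`, where `H²(p, u) = ∑ (√p - √u)²`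
is the squared Hellinger distance. The first sum is at most `2 |X| ‖pd - u‖_∞`, while
`H²(p, u) ≥ ‖p - u‖_∞² / 4 ≥ |X|² ‖pd - u‖_∞` by the hypothesis, and `|X| ≥ 2`. -/

lemma Real.log_le_two_mul_sqrt_sub_one {t : ℝ} (ht : 0 < t) : log t ≤ 2 * (√t - 1) := by
  have h := log_le_sub_one_of_pos (sqrt_pos.2 ht)
  rw [log_sqrt ht.le] at h
  linarith

lemma Real.sq_sub_le_four_mul_sq_sqrt_sub_sqrt {a b : ℝ} (ha : 0 ≤ a) (hb : 0 ≤ b)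
    (ha1 : a ≤ 1) (hb1 : b ≤ 1) : (a - b) ^ 2 ≤ 4 * (√a - √b) ^ 2 := by
  have hfactor : a - b = (√a - √b) * (√a + √b) := by
    linear_combination sq_sqrt hb - sq_sqrt ha
  have hsum : (√a + √b) ^ 2 ≤ 2 ^ 2 :=
    pow_le_pow_left₀ (by positivity) (by linarith [sqrt_le_one.2 ha1, sqrt_le_one.2 hb1]) 2
  rw [hfactor, mul_pow]
  nlinarith [sq_nonneg (√a - √b)]

section Distributions

variable {X : Type*} [Fintype X]

lemma sum_sq_sqrt_sub_sqrt {p q : X → ℝ} (hp : ∀ x, 0 ≤ p x) (hq : ∀ x, 0 ≤ q x)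
    (hpsum : ∑ x, p x = 1) (hqsum : ∑ x, q x = 1) :
    ∑ x, (√(p x) - √(q x)) ^ 2 = 2 - 2 * ∑ x, √(p x) * √(q x) := by
  have hterm : ∀ x, (√(p x) - √(q x)) ^ 2 = p x + q x - 2 * (√(p x) * √(q x)) := fun x => by
    rw [sub_sq, sq_sqrt (hp x), sq_sqrt (hq x)]
    ring
  simp only [hterm, sum_sub_distrib, sum_add_distrib, ← mul_sum, hpsum, hqsum]
  ring

lemma sum_mul_log_div_le {pd p q : X → ℝ} (hpd : ∀ x, 0 ≤ pd x) (hpdsum : ∑ x, pd x = 1)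
    (hp : ∀ x, 0 ≤ p x) (hpsum : ∑ x, p x = 1) (hq : ∀ x, 0 < q x) (hqsum : ∑ x, q x = 1)
    (hac : ∀ x, p x = 0 → pd x = 0) :
    ∑ x, pd x * log (p x / q x) ≤
      2 * ∑ x, (pd x - q x) * √(p x / q x) - ∑ x, (√(p x) - √(q x)) ^ 2 := by
  have hterm : ∀ x, pd x * log (p x / q x) ≤ pd x * (2 * (√(p x / q x) - 1)) := by
    intro x
    rcases (hp x).eq_or_lt with hp0 | hp0
    · simp [hac x hp0.symm]
    · exact mul_le_mul_of_nonneg_left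
        (log_le_two_mul_sqrt_sub_one (div_pos hp0 (hq x))) (hpd x)
  have hsplit : ∀ x, pd x * (2 * (√(p x / q x) - 1)) =
      2 * ((pd x - q x) * √(p x / q x)) + 2 * (√(p x) * √(q x)) - 2 * pd x := fun x => by
    have hsq : √(q x) ≠ 0 := (sqrt_pos.2 (hq x)).ne'
    rw [sqrt_div' _ (hq x).le]
    field_simp
    rw [sq_sqrt (hq x).le]
    ring
  calc ∑ x, pd x * log (p x / q x) ≤ ∑ x, pd x * (2 * (√(p x / q x) - 1)) :=
        sum_le_sum fun x _ => hterm x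
    _ = 2 * ∑ x, (pd x - q x) * √(p x / q x) - (2 - 2 * ∑ x, √(p x) * √(q x)) := by
        simp only [hsplit, sum_sub_distrib, sum_add_distrib, ← mul_sum, hpdsum]
        ring
    _ = _ := by rw [sum_sq_sqrt_sub_sqrt hp (fun x => (hq x).le) hpsum hqsum]

lemma sum_sqrt_div_uniform_le [Nonempty X] {p : X → ℝ} (hp : ∀ x, 0 ≤ p x)
    (hpsum : ∑ x, p x = 1) :
    ∑ x, √(p x / (1 / Fintype.card X)) ≤ Fintype.card X := by
  set N : ℝ := (Fintype.card X : ℝ)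
  have hN : 0 < N := Nat.cast_pos.2 Fintype.card_pos
  have hu : 0 < 1 / N := by positivity
  have hscale : ∀ x, √(p x / (1 / N)) = N * (√(p x) * √(1 / N)) := fun x => by
    have hsu : √(1 / N) ≠ 0 := (sqrt_pos.2 hu).ne'
    rw [sqrt_div' _ hu.le]
    field_simp
    rw [sq_sqrt hu.le]
    field_simp
  have hH := sum_sq_sqrt_sub_sqrt hp (fun _ => hu.le) hpsum (by simp [N])
  have hH0 : 0 ≤ ∑ x, (√(p x) - √(1 / N)) ^ 2 := sum_nonneg fun x _ => sq_nonneg _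
  have hbhatt : ∑ x, √(p x) * √(1 / N) ≤ 1 := by linarith
  rw [sum_congr rfl fun x _ => hscale x, ← mul_sum]
  simpa using mul_le_mul_of_nonneg_left hbhatt hN.le

lemma sum_mul_log_div_uniform_le [Nonempty X] {pd p : X → ℝ} (hpd : ∀ x, 0 ≤ pd x)
    (hpdsum : ∑ x, pd x = 1) (hp : ∀ x, 0 ≤ p x) (hpsum : ∑ x, p x = 1)
    (hac : ∀ x, p x = 0 → pd x = 0) {δ : ℝ} (hδ : ∀ x, |pd x - 1 / (Fintype.card X : ℝ)| ≤ δ)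
    (x₀ : X) :
    ∑ x, pd x * log (p x / (1 / Fintype.card X)) ≤
      2 * Fintype.card X * δ - (p x₀ - 1 / Fintype.card X) ^ 2 / 4 := by
  set N : ℝ := (Fintype.card X : ℝ)
  have hN : 1 ≤ N := Nat.one_le_cast.2 Fintype.card_pos
  have hu : 0 < 1 / N := by positivity
  have hδ0 : 0 ≤ δ := (abs_nonneg _).trans (hδ x₀)
  have hlin : ∑ x, (pd x - 1 / N) * √(p x / (1 / N)) ≤ N * δ :=
    calc ∑ x, (pd x - 1 / N) * √(p x / (1 / N)) ≤ ∑ x, δ * √(p x / (1 / N)) :=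
          sum_le_sum fun x _ =>
            mul_le_mul_of_nonneg_right ((le_abs_self _).trans (hδ x)) (sqrt_nonneg _)
      _ = δ * ∑ x, √(p x / (1 / N)) := (mul_sum _ _ _).symm
      _ ≤ δ * N := mul_le_mul_of_nonneg_left (sum_sqrt_div_uniform_le hp hpsum) hδ0
      _ = N * δ := mul_comm _ _
  have hquad : (p x₀ - 1 / N) ^ 2 / 4 ≤ ∑ x, (√(p x) - √(1 / N)) ^ 2 := by
    have hp₀ : p x₀ ≤ 1 := hpsum ▸ single_le_sum (fun i _ => hp i) (mem_univ x₀)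
    have hu1 : 1 / N ≤ 1 := (div_le_one (by positivity)).2 hN
    calc (p x₀ - 1 / N) ^ 2 / 4 ≤ (√(p x₀) - √(1 / N)) ^ 2 := by
          linarith [sq_sub_le_four_mul_sq_sqrt_sub_sqrt (hp x₀) hu.le hp₀ hu1]
      _ ≤ ∑ x, (√(p x) - √(1 / N)) ^ 2 :=
          single_le_sum (f := fun x => (√(p x) - √(1 / N)) ^ 2) (fun i _ => sq_nonneg _)
            (mem_univ x₀)
  have hbound := sum_mul_log_div_le (q := fun _ => 1 / N) hpd hpdsum hp hpsum (fun _ => hu)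
    (by simp [N]) hac
  linarith

lemma logb_sub_entropy_sub_relEntropy_eq {pd p : X → ℝ} (hpdsum : ∑ x, pd x = 1)
    (hac : ∀ x, p x = 0 → pd x = 0) {c : ℝ} (hc : c ≠ 0) :
    logb 2 c - (-∑ x, pd x * logb 2 (pd x)) - ∑ x, pd x * logb 2 (pd x / p x) =
      (∑ x, pd x * log (p x / (1 / c))) / log 2 := by
  have hterm : ∀ x, pd x * log (p x / (1 / c)) =
      pd x * log c + pd x * log (pd x) - pd x * log (pd x / p x) := fun x => by
    by_cases hpd0 : pd x = 0
    · simp [hpd0]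
    have hp0 : p x ≠ 0 := fun h => hpd0 (hac x h)
    rw [one_div, div_inv_eq_mul, log_mul hp0 hc, log_div hpd0 hp0]
    ring
  rw [sum_congr rfl fun x _ => hterm x, sum_sub_distrib, sum_add_distrib, ← sum_mul, hpdsum]
  simp only [logb, mul_div_assoc', ← sum_div]
  ring

end Distributions

/-- If `‖p − p_u‖_∞ ≥ 2|X| ‖p_d − p_u‖_∞^{1/2}` (with `p_u` uniform, `|X| ≥ 2`,
and `p_d ≪ p` so that `D(p_d‖p)` is finite), then
`log₂|X| − H(p_d) − D(p_d‖p) ≤ 0`. -/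
theorem nonpositive_derivative_condition {X : Type*} [Fintype X] [Nonempty X]
    (hX : 2 ≤ Fintype.card X)
    (pd p : X → ℝ)
    (hpd : ∀ x, 0 ≤ pd x) (hpdsum : ∑ x, pd x = 1)
    (hp : ∀ x, 0 ≤ p x) (hpsum : ∑ x, p x = 1)
    (hac : ∀ x, p x = 0 → pd x = 0)
    (hcond : Finset.univ.sup' Finset.univ_nonempty
        (fun x => |p x - 1 / (Fintype.card X : ℝ)|)
      ≥ 2 * (Fintype.card X : ℝ) *
          Real.sqrt (Finset.univ.sup' Finset.univ_nonempty
            (fun x => |pd x - 1 / (Fintype.card X : ℝ)|))) :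
    Real.logb 2 (Fintype.card X) - (-∑ x, pd x * Real.logb 2 (pd x))
        - ∑ x, pd x * Real.logb 2 (pd x / p x) ≤ 0 := by
  set N : ℝ := (Fintype.card X : ℝ)
  have hN : (2 : ℝ) ≤ N := Nat.ofNat_le_cast.2 hX
  set δ := univ.sup' univ_nonempty fun x => |pd x - 1 / N|
  have hδ : ∀ x, |pd x - 1 / N| ≤ δ := fun x => le_sup' (fun x => |pd x - 1 / N|) (mem_univ x)
  obtain ⟨x₀, -, hx₀⟩ := exists_mem_eq_sup' univ_nonempty fun x => |p x - 1 / N|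
  have hδ0 : 0 ≤ δ := (abs_nonneg _).trans (hδ x₀)
  have hsep : 4 * N ^ 2 * δ ≤ (p x₀ - 1 / N) ^ 2 := by
    have h := pow_le_pow_left₀ (by positivity) (hx₀ ▸ hcond) 2
    rw [sq_abs, mul_pow, sq_sqrt hδ0, mul_pow] at h
    linarith
  have hkey := sum_mul_log_div_uniform_le hpd hpdsum hp hpsum hac hδ x₀
  rw [logb_sub_entropy_sub_relEntropy_eq hpdsum hac (by positivity)]
  refine div_nonpos_of_nonpos_of_nonneg ?_ (log_nonneg one_le_two)
  nlinarith [mul_nonneg hδ0 (sub_nonneg.2 hN)]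
end

section
/- Let p be a probability distribution over a finite alphabet X (identified with Z/|X|Z) and for each j let p^{(−j)} denote the cyclic shift of p by j+1 positions. Then max_{j ∈ {0,…,|X|−2}} ‖p^{(−j)} − p‖_∞ = max_x p(x) − min_x p(x), and consequently this maximum is strictly greater than ‖p − p_u‖_∞ whenever p is not the uniform distribution p_u. -/
open Finset
open Fin.NatCast

/-! Every difference `p (i + s) - p i` lies between `min p - max p` and `max p - min p`, and the
bound is attained by the shift `s = argmax p - argmin p`; on `Fin K` every nonzero shift is of the
form `j + 1` with `j < K - 1`. For the strict inequality, a non-uniform distribution summing to `1`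
has `min p < 1 / K < max p`, so each `|p i - 1 / K|` is strictly below `max p - min p`. -/

section SupInf

variable {ι α : Type*} [AddCommGroup α] [LinearOrder α] [IsOrderedAddMonoid α]

theorem Finset.abs_sub_le_sup'_sub_inf' {s : Finset ι} (hs : s.Nonempty) (f : ι → α) {a b : ι}
    (ha : a ∈ s) (hb : b ∈ s) : |f a - f b| ≤ s.sup' hs f - s.inf' hs f :=
  abs_sub_le_of_le_of_le (inf'_le f ha) (le_sup' f ha) (inf'_le f hb) (le_sup' f hb)

theorem Finset.sup'_abs_sub_lt_sup'_sub_inf' {s : Finset ι} (hs : s.Nonempty) {f : ι → α} {c : α}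
    (hlo : s.inf' hs f < c) (hhi : c < s.sup' hs f) :
    s.sup' hs (fun i => |f i - c|) < s.sup' hs f - s.inf' hs f := by
  refine (sup'_lt_iff hs).2 fun i hi => abs_sub_lt_iff.2 ⟨?_, ?_⟩
  · exact (sub_le_sub_right (le_sup' f hi) c).trans_lt (sub_lt_sub_left hlo _)
  · exact (sub_lt_sub_right hhi _).trans_le (sub_le_sub_left (inf'_le f hi) _)

theorem Finset.sup'_abs_add_sub_eq_sup'_sub_inf' {G : Type*} [AddGroup G] [Fintype G]
    (f : G → α) {s : Finset ι} (hs : s.Nonempty) (σ : ι → G)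
    (hσ : ∀ g ≠ 0, ∃ j ∈ s, σ j = g) :
    s.sup' hs (fun j => univ.sup' univ_nonempty (fun i => |f (i + σ j) - f i|))
      = univ.sup' univ_nonempty f - univ.inf' univ_nonempty f := by
  refine le_antisymm (sup'_le _ _ fun j _ => sup'_le _ _ fun i _ =>
    abs_sub_le_sup'_sub_inf' _ f (mem_univ _) (mem_univ _)) ?_
  obtain ⟨a, -, ha⟩ := exists_mem_eq_sup' univ_nonempty f
  obtain ⟨b, -, hb⟩ := exists_mem_eq_inf' univ_nonempty f
  rw [ha, hb]
  by_cases hab : a = b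
  · obtain ⟨j, hj⟩ := hs
    rw [hab, sub_self]
    exact le_sup'_of_le _ hj (le_sup'_of_le _ (mem_univ 0) (abs_nonneg _))
  obtain ⟨j, hj, hσj⟩ := hσ (-b + a) (mt neg_add_eq_zero.1 (Ne.symm hab))
  refine le_sup'_of_le _ hj (le_sup'_of_le _ (mem_univ b) ?_)
  rw [hσj, add_neg_cancel_left]
  exact le_abs_self _

end SupInf

theorem Finset.exists_mem_lt_of_sum_eq_of_ne {ι M : Type*} [AddCommMonoid M] [LinearOrder M]
    [IsOrderedCancelAddMonoid M] {s : Finset ι} {f g : ι → M}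
    (hsum : ∑ i ∈ s, f i = ∑ i ∈ s, g i) (hne : ∃ i ∈ s, f i ≠ g i) : ∃ i ∈ s, f i < g i := by
  by_contra! hge
  obtain ⟨i, hi, hfg⟩ := hne
  exact hfg ((sum_eq_sum_iff_of_le hge).1 hsum.symm i hi).symm

theorem Fin.exists_mem_range_natCast_succ_eq {K : ℕ} [NeZero K] {d : Fin K} (hd : d ≠ 0) :
    ∃ j ∈ range (K - 1), ((j + 1 : ℕ) : Fin K) = d := by
  refine ⟨d.val - 1, mem_range.2 (by omega), ?_⟩
  have := Fin.val_ne_zero_iff.2 hd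
  rw [Nat.sub_add_cancel (by omega), Fin.cast_val_eq_self]

/-- **Cyclic shifts and the L∞ distance to uniform.** For a probability distribution `p` on
`X = Z/KZ` (`K ≥ 2`), the maximal sup-norm distance between `p` and its nontrivial cyclic
shifts `p^{(−j)}(i) = p(i + j + 1)` equals `max p − min p`; consequently it is strictly
greater than `‖p − p_u‖_∞` whenever `p` is not uniform. -/
theorem cyclic_shift_Linf {K : ℕ} [NeZero K] (hK : 2 ≤ K)
    (p : Fin K → ℝ) (hsum : ∑ x, p x = 1) :
    ((Finset.range (K - 1)).sup'
        (Finset.nonempty_range_iff.mpr (by omega))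
        (fun j => Finset.univ.sup' Finset.univ_nonempty
          (fun i : Fin K => |p (i + ((j + 1 : ℕ) : Fin K)) - p i|))
      = Finset.univ.sup' Finset.univ_nonempty p
          - Finset.univ.inf' Finset.univ_nonempty p) ∧
    (p ≠ (fun _ => 1 / (K : ℝ)) →
      ((Finset.range (K - 1)).sup'
          (Finset.nonempty_range_iff.mpr (by omega))
          (fun j => Finset.univ.sup' Finset.univ_nonempty
            (fun i : Fin K => |p (i + ((j + 1 : ℕ) : Fin K)) - p i|))
        > Finset.univ.sup' Finset.univ_nonempty
            (fun i : Fin K => |p i - 1 / (K : ℝ)|))) := by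
  have hshift := sup'_abs_add_sub_eq_sup'_sub_inf' p (nonempty_range_iff.2 (by omega))
    (fun j => ((j + 1 : ℕ) : Fin K)) fun _ => Fin.exists_mem_range_natCast_succ_eq
  refine ⟨hshift, fun hne => ?_⟩
  have hsum_uniform : ∑ _ : Fin K, 1 / (K : ℝ) = 1 := by
    simp [NeZero.ne K]
  obtain ⟨x, hx⟩ := Function.ne_iff.1 hne
  obtain ⟨lo, -, hlo⟩ := exists_mem_lt_of_sum_eq_of_ne (hsum.trans hsum_uniform.symm)
    ⟨x, mem_univ x, hx⟩
  obtain ⟨hi, -, hhi⟩ := exists_mem_lt_of_sum_eq_of_ne (hsum_uniform.trans hsum.symm)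
    ⟨x, mem_univ x, Ne.symm hx⟩
  rw [hshift]
  exact sup'_abs_sub_lt_sup'_sub_inf' _ ((inf'_le p (mem_univ lo)).trans_lt hlo)
    (hhi.trans_le (le_sup' p (mem_univ hi)))
end
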